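/- arXiv:2111.02102 — 10 statements merged into one kernel-verified Lean document; each statement's English description precedes it below -/
import Mathlib

section
/- Let R be an almost Dedekind domain and M a maximal ideal of R. Then M is an isolated point of Max(R), endowed with the inverse (equivalently, constructible) topology, if and only if M is finitely generated as an ideal. -/
/-!
The sets `V(I)`, `I` finitely generated, form a basis of the inverse topology, so `{M}` is open
exactly when `V(I) = {M}` for some finitely generated `I`; if `M` is finitely generated, take
`I = M`. Conversely, pick `x ∈ M` generating the maximal ideal of the DVR `R_M`. Then
`J = I + (x)` is finitely generated and agrees with `M` after localizing at every maximal ideal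
`P`: at `M` because of `x`, and at `P ≠ M` because neither `J` nor `M` lies in `P`.
-/

/-- An integral domain is almost Dedekind if its localization at every maximal ideal
is a discrete valuation ring. -/
def AlmostDedekind (R : Type*) [CommRing R] [IsDomain R] : Prop :=
  ∀ M : MaximalSpectrum R, IsDiscreteValuationRing (Localization.AtPrime M.asIdeal)

/-- The inverse topology on the maximal spectrum: the topology generated by the
sets `V(I)` for `I` a finitely generated ideal (the complements of the
quasi-compact Zariski-open sets). -/
def invTop (R : Type*) [CommRing R] : TopologicalSpace (MaximalSpectrum R) :=
  .generateFrom {s | ∃ I : Ideal R, I.FG ∧ s = {M | I ≤ M.asIdeal}}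

open IsLocalRing

lemma Ideal.exists_mem_map_eq_span_singleton_of_isPrincipal {R : Type*} [CommRing R]
    (P : Ideal R) [P.IsPrime] [(maximalIdeal (Localization.AtPrime P)).IsPrincipal] :
    ∃ x ∈ P, P.map (algebraMap R (Localization.AtPrime P)) =
      Ideal.span {algebraMap R (Localization.AtPrime P) x} := by
  obtain ⟨y, hy⟩ := Submodule.IsPrincipal.principal (maximalIdeal (Localization.AtPrime P))
  obtain ⟨⟨x, s⟩, hxs⟩ := IsLocalization.mk'_surjective P.primeCompl y
  have hmax : maximalIdeal (Localization.AtPrime P) =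
      Ideal.span {algebraMap R (Localization.AtPrime P) x} := by
    have hs : IsUnit (IsLocalization.mk' (Localization.AtPrime P) (1 : R) s) :=
      (IsLocalization.AtPrime.isUnit_mk'_iff _ P 1 s).mpr P.primeCompl.one_mem
    rw [hy, ← hxs, ← Ideal.span_singleton_mul_right_unit hs, ← IsLocalization.mk'_eq_mul_mk'_one]
  refine ⟨x, ?_, by rw [Localization.AtPrime.map_eq_maximalIdeal, hmax]⟩
  rw [← IsLocalization.AtPrime.to_map_mem_maximal_iff (Localization.AtPrime P) P, hmax]
  exact Ideal.mem_span_singleton_self _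

namespace MaximalSpectrum

variable {R : Type*} [CommRing R]

lemma isTopologicalBasis_invTop :
    @TopologicalSpace.IsTopologicalBasis _ (invTop R)
      {s | ∃ I : Ideal R, I.FG ∧ s = {M | I ≤ M.asIdeal}} := by
  let _ := invTop R
  refine TopologicalSpace.isTopologicalBasis_of_subbasis_of_finiteInter rfl ⟨?_, ?_⟩
  · exact ⟨⊥, Submodule.fg_bot, by ext N; simp⟩
  · rintro s ⟨I, hI, rfl⟩ t ⟨J, hJ, rfl⟩
    exact ⟨I ⊔ J, Submodule.FG.sup hI hJ, by ext N; simp⟩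

lemma isOpen_singleton_invTop_iff (M : MaximalSpectrum R) :
    @IsOpen _ (invTop R) {M} ↔ ∃ I : Ideal R, I.FG ∧ {N | I ≤ N.asIdeal} = {M} := by
  let _ := invTop R
  constructor
  · intro hM
    obtain ⟨_, ⟨I, hI, rfl⟩, hMI, hIM⟩ := isTopologicalBasis_invTop.isOpen_iff.mp hM M rfl
    exact ⟨I, hI, hIM.antisymm (Set.singleton_subset_iff.mpr hMI)⟩
  · rintro ⟨I, hI, hIM⟩
    exact hIM ▸ TopologicalSpace.isOpen_generateFrom_of_mem ⟨I, hI, rfl⟩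

lemma setOf_asIdeal_le_eq_singleton (M : MaximalSpectrum R) :
    {N | M.asIdeal ≤ N.asIdeal} = {M} := by
  ext N
  refine ⟨fun h => (MaximalSpectrum.ext (M.2.eq_of_le N.2.ne_top h)).symm, ?_⟩
  rintro rfl
  exact le_refl N.asIdeal

lemma eq_asIdeal_of_map_atPrime_eq {I : Ideal R} {M : MaximalSpectrum R}
    (hIM : {N | I ≤ N.asIdeal} ⊆ {M})
    (hmap : I.map (algebraMap R (Localization.AtPrime M.asIdeal)) =
      M.asIdeal.map (algebraMap R (Localization.AtPrime M.asIdeal))) :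
    I = M.asIdeal := by
  refine Ideal.eq_of_localization_maximal fun P hP => ?_
  by_cases hPM : P = M.asIdeal
  · subst hPM
    exact hmap
  · have hIP : ¬ I ≤ P := fun h => hPM (congrArg asIdeal (hIM (show ⟨P, hP⟩ ∈ _ from h)))
    have hMP : ¬ M.asIdeal ≤ P := fun h => hPM (M.2.eq_of_le hP.ne_top h).symm
    rw [IsLocalization.AtPrime.map_eq_top_of_not_le _ hIP,
      IsLocalization.AtPrime.map_eq_top_of_not_le _ hMP]

end MaximalSpectrum

/-- In an almost Dedekind domain, a maximal ideal `M` is an isolated point of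
`Max(R)` with the inverse topology if and only if `M` is finitely generated. -/
theorem stmt1 {R : Type*} [CommRing R] [IsDomain R] (hR : AlmostDedekind R)
    (M : MaximalSpectrum R) :
    @IsOpen _ (invTop R) {M} ↔ M.asIdeal.FG := by
  rw [MaximalSpectrum.isOpen_singleton_invTop_iff]
  refine ⟨fun ⟨I, hI, hIM⟩ => ?_, fun hM => ⟨M.asIdeal, hM, M.setOf_asIdeal_le_eq_singleton⟩⟩
  have hIle : I ≤ M.asIdeal := hIM.ge rfl
  have := hR M
  obtain ⟨x, hxM, hx⟩ := M.asIdeal.exists_mem_map_eq_span_singleton_of_isPrincipal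
  have hJM : I ⊔ Ideal.span {x} = M.asIdeal := by
    refine MaximalSpectrum.eq_asIdeal_of_map_atPrime_eq
      (fun N hN => hIM.subset (le_sup_left.trans hN : I ≤ N.asIdeal)) ?_
    refine le_antisymm (Ideal.map_mono (sup_le hIle ?_)) ?_
    · exact Ideal.span_le.mpr (Set.singleton_subset_iff.mpr hxM)
    · rw [hx, Ideal.span_le, Set.singleton_subset_iff]
      exact Ideal.mem_map_of_mem _ (Ideal.mem_sup_right (Ideal.mem_span_singleton_self x))
  exact hJM ▸ Submodule.FG.sup hI (Submodule.fg_span_singleton x)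
end

section
/- Let R be an almost Dedekind domain. Then every critical maximal ideal of R is a non-isolated point of Max(R) with the inverse topology; that is, Crit(R) is contained in the derived set of Max(R). -/
/-- The set of critical maximal ideals: `M` is critical if every finitely generated
ideal contained in `M` is contained in the square of some maximal ideal. -/
def Crit (R : Type*) [CommRing R] : Set (MaximalSpectrum R) :=
  {M | ∀ I : Ideal R, I.FG → I ≤ M.asIdeal → ∃ N : Ideal R, N.IsMaximal ∧ I ≤ N ^ 2}

open TopologicalSpace

theorem Ideal.sq_lt_self_of_isDiscreteValuationRing {R : Type*} [CommRing R] [IsDomain R]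
    (P : Ideal R)
    [P.IsPrime] [IsDiscreteValuationRing (Localization.AtPrime P)] : P ^ 2 < P := by
  set K := IsLocalRing.maximalIdeal (Localization.AtPrime P)
  refine lt_of_le_of_ne (Ideal.pow_le_self two_ne_zero) fun h ↦ ?_
  have hK : K ^ 2 = K := by
    simpa only [Ideal.map_pow, Localization.AtPrime.map_eq_maximalIdeal] using
      congrArg (Ideal.map (algebraMap R (Localization.AtPrime P))) h
  exact (Ideal.pow_lt_self K (IsDiscreteValuationRing.not_a_field _)
    (IsLocalRing.maximalIdeal.isMaximal _).ne_top 2 le_rfl).ne hK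

theorem invTop_isTopologicalBasis (R : Type*) [CommRing R] :
    @IsTopologicalBasis _ (invTop R) {s | ∃ I : Ideal R, I.FG ∧ s = {M | I ≤ M.asIdeal}} :=
  letI := invTop R
  isTopologicalBasis_of_subbasis_of_finiteInter rfl
    { univ_mem := ⟨⊥, Submodule.fg_bot, by simp⟩
      inter_mem := by
        rintro _ ⟨I, hI, rfl⟩ _ ⟨J, hJ, rfl⟩
        exact ⟨I ⊔ J, Submodule.FG.sup hI hJ, by ext; simp⟩ }

theorem le_sq_of_mem_Crit {R : Type*} [CommRing R] {M : MaximalSpectrum R} (hM : M ∈ Crit R)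
    {I : Ideal R} (hI : I.FG) (hIM : I ≤ M.asIdeal)
    (hV : ∀ N : MaximalSpectrum R, I ≤ N.asIdeal → N = M) : M.asIdeal ≤ M.asIdeal ^ 2 := by
  intro t ht
  obtain ⟨N, hN, hle⟩ := hM (I ⊔ Ideal.span {t}) (Submodule.FG.sup hI (Submodule.fg_span_singleton t))
    (sup_le hIM ((Ideal.span_singleton_le_iff_mem _).mpr ht))
  have hNM : N = M.asIdeal :=
    congrArg MaximalSpectrum.asIdeal
      (hV ⟨N, hN⟩ (le_sup_left.trans (hle.trans (Ideal.pow_le_self two_ne_zero))))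
  exact hNM ▸ hle (Ideal.mem_sup_right (Ideal.mem_span_singleton_self t))

/-- In an almost Dedekind domain, every critical maximal ideal is a non-isolated
point of `Max(R)` with the inverse topology, i.e. `Crit(R)` is contained in the
derived set of `Max(R)`. -/
theorem stmt3 {R : Type*} [CommRing R] [IsDomain R] (hR : AlmostDedekind R) :
    ∀ M ∈ Crit R, ¬ @IsOpen _ (invTop R) {M} := by
  let := invTop R
  intro M hM hopen
  obtain ⟨_, ⟨I, hI, rfl⟩, hIM, hV⟩ :=
    (invTop_isTopologicalBasis R).isOpen_iff.mp hopen M rfl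
  have := hR M
  exact (M.asIdeal.sq_lt_self_of_isDiscreteValuationRing).not_ge
    (le_sq_of_mem_Crit hM hI hIM fun N hN ↦ hV hN)
end

section
/- Let R be an almost Dedekind domain and I, J fractional ideals of R. For each maximal ideal M let v_M(I) be the integer n with I R_M = (M R_M)^n. Then: ν_I ≤ ν_J pointwise if and only if J ⊆ I; ν_I = ν_J if and only if I = J; ν_{IJ} = ν_I + ν_J; ν_{I+J} = min(ν_I, ν_J) pointwise; and ν_{I∩J} = max(ν_I, ν_J) pointwise. -/
/-!
Each `v M` is an ultrametric valuation on `K`, so `{z | z = 0 ∨ c ≤ v M z}` is an `R`-submodule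
of `K`; this gives the lower bounds for `ν` of products and sums, and explicit elements give the
upper bounds. The remaining statements rest on one local step: if `a ∈ I` is nonzero and
`v M a ≤ v M x`, then, `R_M` being a valuation ring, `t x ∈ R a ⊆ I` for some `t ∉ M`.
Hence if `ν I ≤ ν J` everywhere and `x ∈ J`, the ideal `{r | r x ∈ I}` lies in no maximal ideal,
so `x ∈ I`; and the same step produces an element of `I ∩ J` of value `max (ν I M) (ν J M)`.
-/

open nonZeroDivisors

theorem Submodule.mem_of_forall_isMaximal {R M : Type*} [CommRing R] [AddCommGroup M]
    [Module R M] (N : Submodule R M) {x : M}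
    (h : ∀ P : Ideal R, P.IsMaximal → ∃ s ∉ P, s • x ∈ N) : x ∈ N := by
  by_contra hx
  have hne : N.colon {x} ≠ ⊤ := fun htop =>
    hx (by simpa using Submodule.mem_colon_singleton.1 (htop ▸ Submodule.mem_top : (1 : R) ∈ _))
  obtain ⟨P, hP, hle⟩ := Ideal.exists_le_maximal _ hne
  obtain ⟨s, hsP, hs⟩ := h P hP
  exact hsP (hle (Submodule.mem_colon_singleton.2 hs))

/-- `w` is the `P`-adic order on `R`, extended multiplicatively to `K`; for `P` maximal with `R_P`
a DVR this is the normalized valuation of `R_P`. -/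
structure IsAdicOrder {R K : Type*} [CommRing R] [Field K] [Algebra R K]
    (P : Ideal R) (w : K → ℤ) : Prop where
  map_mul : ∀ x y : K, x ≠ 0 → y ≠ 0 → w (x * y) = w x + w y
  natCast_le_iff : ∀ r : R, r ≠ 0 → ∀ n : ℕ, ((n : ℤ) ≤ w (algebraMap R K r) ↔ r ∈ P ^ n)

namespace IsAdicOrder

variable {R K : Type*} [CommRing R] [Field K] [Algebra R K] {P : Ideal R} {w : K → ℤ}

theorem nonneg (hw : IsAdicOrder P w) {r : R} (hr : r ≠ 0) : 0 ≤ w (algebraMap R K r) := by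
  simpa using (hw.natCast_le_iff r hr 0).2 (by simp)

theorem pos_iff_mem (hw : IsAdicOrder P w) {r : R} (hr : r ≠ 0) :
    0 < w (algebraMap R K r) ↔ r ∈ P := by
  rw [← pow_one P, ← hw.natCast_le_iff r hr 1]
  omega

theorem eq_zero_of_notMem (hw : IsAdicOrder P w) {r : R} (hr : r ∉ P) :
    w (algebraMap R K r) = 0 := by
  have hr0 : r ≠ 0 := by rintro rfl; exact hr P.zero_mem
  have := hw.nonneg hr0
  have := mt (hw.pos_iff_mem hr0).1 hr
  omega

theorem min_le_add_algebraMap (hw : IsAdicOrder P w) {a b : R} (ha : a ≠ 0) (hb : b ≠ 0)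
    (hab : a + b ≠ 0) :
    min (w (algebraMap R K a)) (w (algebraMap R K b)) ≤ w (algebraMap R K (a + b)) := by
  obtain ⟨n, hn⟩ := Int.eq_ofNat_of_zero_le (le_min (hw.nonneg ha) (hw.nonneg hb))
  rw [hn]
  exact (hw.natCast_le_iff _ hab n).2 <| Ideal.add_mem _
    ((hw.natCast_le_iff a ha n).1 (hn ▸ min_le_left _ _))
    ((hw.natCast_le_iff b hb n).1 (hn ▸ min_le_right _ _))

section FractionRing

variable [IsFractionRing R K]

theorem algebraMap_mul (hw : IsAdicOrder P w) {a b : R} (ha : a ≠ 0) (hb : b ≠ 0) :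
    w (algebraMap R K (a * b)) = w (algebraMap R K a) + w (algebraMap R K b) := by
  rw [_root_.map_mul]
  exact hw.map_mul _ _ (IsFractionRing.to_map_eq_zero_iff.not.2 ha)
    (IsFractionRing.to_map_eq_zero_iff.not.2 hb)

variable [IsDomain R]

theorem min_le_add (hw : IsAdicOrder P w) {x y : K} (hx : x ≠ 0) (hy : y ≠ 0)
    (hxy : x + y ≠ 0) : min (w x) (w y) ≤ w (x + y) := by
  obtain ⟨s, hs⟩ := IsLocalization.exist_integer_multiples_of_finite R⁰ ![x, y]
  obtain ⟨a, ha⟩ := hs 0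
  obtain ⟨b, hb⟩ := hs 1
  simp only [Matrix.cons_val_zero, Matrix.cons_val_one, Algebra.smul_def] at ha hb
  have hs0 : algebraMap R K s ≠ 0 := IsFractionRing.to_map_ne_zero_of_mem_nonZeroDivisors s.2
  have hab : algebraMap R K (a + b) = algebraMap R K s * (x + y) := by
    rw [map_add, ha, hb, mul_add]
  have clear : ∀ {c : R} {z : K}, z ≠ 0 → algebraMap R K c = algebraMap R K s * z →
      c ≠ 0 ∧ w (algebraMap R K c) = w (algebraMap R K s) + w z := fun hz hc =>
    ⟨by rintro rfl; exact mul_ne_zero hs0 hz (by simpa using hc.symm),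
      by rw [hc, hw.map_mul _ _ hs0 hz]⟩
  obtain ⟨ha0, hwa⟩ := clear hx ha
  obtain ⟨hb0, hwb⟩ := clear hy hb
  obtain ⟨hab0, hwab⟩ := clear hxy hab
  have := hw.min_le_add_algebraMap ha0 hb0 hab0
  rw [hwa, hwb, hwab, min_add_add_left] at this
  linarith

def atLeast (hw : IsAdicOrder P w) (c : ℤ) : Submodule R K where
  carrier := {z | z = 0 ∨ c ≤ w z}
  zero_mem' := Or.inl rfl
  add_mem' {x y} hx hy := by
    by_cases hx0 : x = 0
    · simpa [hx0] using hy
    by_cases hy0 : y = 0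
    · simpa [hy0] using hx
    by_cases hxy : x + y = 0
    · exact Or.inl hxy
    exact Or.inr ((le_min (hx.resolve_left hx0) (hy.resolve_left hy0)).trans
      (hw.min_le_add hx0 hy0 hxy))
  smul_mem' r z hz := by
    by_cases hr : r = 0
    · exact Or.inl (by simp [hr])
    by_cases hz0 : z = 0
    · exact Or.inl (by simp [hz0])
    refine Or.inr ?_
    rw [Algebra.smul_def, hw.map_mul _ _ (IsFractionRing.to_map_eq_zero_iff.not.2 hr) hz0]
    linarith [hw.nonneg hr, hz.resolve_left hz0]

theorem le_atLeast_iff (hw : IsAdicOrder P w) {c : ℤ} {F : Submodule R K} :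
    F ≤ hw.atLeast c ↔ c ∈ lowerBounds (w '' {x | x ∈ F ∧ x ≠ 0}) := by
  constructor
  · rintro h _ ⟨x, ⟨hx, hx0⟩, rfl⟩
    exact (h hx).resolve_left hx0
  · intro h x hx
    by_cases hx0 : x = 0
    · exact Or.inl hx0
    · exact Or.inr (h ⟨x, ⟨hx, hx0⟩, rfl⟩)

theorem isLeast_mul (hw : IsAdicOrder P w) {F G : Submodule R K} {m n : ℤ}
    (hF : IsLeast (w '' {x | x ∈ F ∧ x ≠ 0}) m) (hG : IsLeast (w '' {x | x ∈ G ∧ x ≠ 0}) n) :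
    IsLeast (w '' {x | x ∈ F * G ∧ x ≠ 0}) (m + n) := by
  obtain ⟨a, ⟨ha, ha0⟩, rfl⟩ := hF.1
  obtain ⟨b, ⟨hb, hb0⟩, rfl⟩ := hG.1
  refine ⟨⟨a * b, ⟨Submodule.mul_mem_mul ha hb, mul_ne_zero ha0 hb0⟩, hw.map_mul _ _ ha0 hb0⟩,
    hw.le_atLeast_iff.1 (Submodule.mul_le.2 fun x hx y hy => ?_)⟩
  by_cases hx0 : x = 0
  · exact Or.inl (by simp [hx0])
  by_cases hy0 : y = 0
  · exact Or.inl (by simp [hy0])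
  refine Or.inr ?_
  rw [hw.map_mul _ _ hx0 hy0]
  exact add_le_add (hF.2 ⟨x, ⟨hx, hx0⟩, rfl⟩) (hG.2 ⟨y, ⟨hy, hy0⟩, rfl⟩)

theorem isLeast_sup (hw : IsAdicOrder P w) {F G : Submodule R K} {m n : ℤ}
    (hF : IsLeast (w '' {x | x ∈ F ∧ x ≠ 0}) m) (hG : IsLeast (w '' {x | x ∈ G ∧ x ≠ 0}) n) :
    IsLeast (w '' {x | x ∈ F ⊔ G ∧ x ≠ 0}) (min m n) := by
  have hmono : ∀ {H : Submodule R K}, H ≤ F ⊔ G →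
      w '' {x | x ∈ H ∧ x ≠ 0} ⊆ w '' {x | x ∈ F ⊔ G ∧ x ≠ 0} :=
    fun hH => Set.image_mono fun x hx => ⟨hH hx.1, hx.2⟩
  refine ⟨?_, hw.le_atLeast_iff.1 (sup_le ?_ ?_)⟩
  · rcases min_choice m n with h | h <;> rw [h]
    exacts [hmono le_sup_left hF.1, hmono le_sup_right hG.1]
  · exact hw.le_atLeast_iff.2 fun k hk => (min_le_left m n).trans (hF.2 hk)
  · exact hw.le_atLeast_iff.2 fun k hk => (min_le_right m n).trans (hG.2 hk)

section ValuationRing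

variable [P.IsPrime] [ValuationRing (Localization.AtPrime P)]

theorem exists_mul_eq_mul_of_le (hw : IsAdicOrder P w) {p q : R} (hp : p ≠ 0) (hq : q ≠ 0)
    (hle : w (algebraMap R K q) ≤ w (algebraMap R K p)) : ∃ t ∉ P, ∃ r, t * p = q * r := by
  have hinj := IsLocalization.injective (Localization.AtPrime P) P.primeCompl_le_nonZeroDivisors
  obtain ⟨c, hc | hc⟩ :=
    ValuationRing.cond (algebraMap R (Localization.AtPrime P) p) (algebraMap R _ q) <;>
  obtain ⟨⟨r, s⟩, hrs⟩ := IsLocalization.surj P.primeCompl c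
  · have hpr : p * r = q * s := hinj (by rw [_root_.map_mul, _root_.map_mul, ← hrs, ← hc]; ring)
    have hs0 : (s : R) ≠ 0 := fun h => s.2 (h ▸ P.zero_mem)
    have hr0 : r ≠ 0 := by
      rintro rfl
      exact mul_ne_zero hq hs0 (by simpa using hpr.symm)
    have hwr := hw.algebraMap_mul hp hr0
    rw [hpr, hw.algebraMap_mul hq hs0, hw.eq_zero_of_notMem s.2] at hwr
    have hr : r ∉ P := fun hr => by linarith [(hw.pos_iff_mem hr0).2 hr]
    exact ⟨r, hr, s, by linear_combination hpr⟩
  · have hqr : q * r = p * s := hinj (by rw [_root_.map_mul, _root_.map_mul, ← hrs, ← hc]; ring)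
    exact ⟨s, s.2, r, by linear_combination -hqr⟩

theorem exists_smul_mem_of_le (hw : IsAdicOrder P w) {F : Submodule R K} {a x : K} (ha : a ∈ F)
    (ha0 : a ≠ 0) (hx0 : x ≠ 0) (hle : w a ≤ w x) : ∃ t ∉ P, t • x ∈ F := by
  obtain ⟨p, q, hq, hpq⟩ := IsFractionRing.div_surjective (A := R) (x / a)
  have hq0 : algebraMap R K q ≠ 0 := IsFractionRing.to_map_ne_zero_of_mem_nonZeroDivisors hq
  have hqx : algebraMap R K q * x = algebraMap R K p * a := by
    field_simp at hpq
    linear_combination -hpq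
  have hp0 : algebraMap R K p ≠ 0 := fun h => mul_ne_zero hq0 hx0 (by simp [hqx, h])
  have hwqp : w (algebraMap R K q) ≤ w (algebraMap R K p) := by
    have := congrArg w hqx
    rw [hw.map_mul _ _ hq0 hx0, hw.map_mul _ _ hp0 ha0] at this
    linarith
  obtain ⟨t, ht, r, htr⟩ := hw.exists_mul_eq_mul_of_le (by simpa using hp0)
    (nonZeroDivisors.ne_zero hq) hwqp
  refine ⟨t, ht, ?_⟩
  have htr' := congrArg (algebraMap R K) htr
  simp only [_root_.map_mul] at htr'
  have htx : algebraMap R K t * x = algebraMap R K r * a := by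
    apply mul_left_cancel₀ hq0
    linear_combination algebraMap R K t * hqx + a * htr'
  rw [Algebra.smul_def, htx, ← Algebra.smul_def]
  exact F.smul_mem r ha

theorem isLeast_inf_of_le (hw : IsAdicOrder P w) {F G : Submodule R K} {m n : ℤ}
    (hF : IsLeast (w '' {x | x ∈ F ∧ x ≠ 0}) m) (hG : IsLeast (w '' {x | x ∈ G ∧ x ≠ 0}) n)
    (hmn : m ≤ n) : IsLeast (w '' {x | x ∈ F ⊓ G ∧ x ≠ 0}) n := by
  obtain ⟨a, ⟨ha, ha0⟩, rfl⟩ := hF.1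
  obtain ⟨b, ⟨hb, hb0⟩, rfl⟩ := hG.1
  obtain ⟨t, ht, htb⟩ := hw.exists_smul_mem_of_le ha ha0 hb0 hmn
  have ht0 : algebraMap R K t ≠ 0 :=
    IsFractionRing.to_map_eq_zero_iff.not.2 fun h => ht (h ▸ P.zero_mem)
  have htb0 : t • b ≠ 0 := by rw [Algebra.smul_def]; exact mul_ne_zero ht0 hb0
  refine ⟨⟨t • b, ⟨⟨htb, G.smul_mem t hb⟩, htb0⟩, ?_⟩, ?_⟩
  · rw [Algebra.smul_def, hw.map_mul _ _ ht0 hb0, hw.eq_zero_of_notMem ht, zero_add]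
  · rintro _ ⟨x, ⟨hx, hx0⟩, rfl⟩
    exact hG.2 ⟨x, ⟨hx.2, hx0⟩, rfl⟩

theorem isLeast_inf (hw : IsAdicOrder P w) {F G : Submodule R K} {m n : ℤ}
    (hF : IsLeast (w '' {x | x ∈ F ∧ x ≠ 0}) m) (hG : IsLeast (w '' {x | x ∈ G ∧ x ≠ 0}) n) :
    IsLeast (w '' {x | x ∈ F ⊓ G ∧ x ≠ 0}) (max m n) := by
  rcases le_total m n with h | h
  · simpa [max_eq_right h] using hw.isLeast_inf_of_le hF hG h
  · simpa [max_eq_left h, inf_comm] using hw.isLeast_inf_of_le hG hF h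

end ValuationRing

end FractionRing

end IsAdicOrder

theorem Submodule.le_of_forall_isLeast_le {R K : Type*} [CommRing R] [IsDomain R] [Field K]
    [Algebra R K] [IsFractionRing R K] (hR : AlmostDedekind R) {v : MaximalSpectrum R → K → ℤ}
    (hv : ∀ M, IsAdicOrder M.asIdeal (v M)) {F G : Submodule R K} {m n : MaximalSpectrum R → ℤ}
    (hF : ∀ M, IsLeast (v M '' {x | x ∈ F ∧ x ≠ 0}) (m M))
    (hG : ∀ M, n M ∈ lowerBounds (v M '' {x | x ∈ G ∧ x ≠ 0})) (hmn : ∀ M, m M ≤ n M) :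
    G ≤ F := by
  intro x hx
  by_cases hx0 : x = 0
  · simp [hx0]
  refine F.mem_of_forall_isMaximal fun P hP => ?_
  let M : MaximalSpectrum R := ⟨P, hP⟩
  have := hR M
  obtain ⟨a, ⟨ha, ha0⟩, hwa⟩ := (hF M).1
  exact (hv M).exists_smul_mem_of_le ha ha0 hx0 (hwa ▸ (hmn M).trans (hG M ⟨x, ⟨hx, hx0⟩, rfl⟩))

theorem FractionalIdeal.ne_zero_of_isLeast {R K : Type*} [CommRing R] [Field K] [Algebra R K]
    {I : FractionalIdeal R⁰ K} {w : K → ℤ} {m : ℤ}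
    (h : IsLeast (w '' {x | x ∈ I ∧ x ≠ 0}) m) : I ≠ 0 := by
  rintro rfl
  obtain ⟨x, ⟨hx, hx0⟩, -⟩ := h.1
  exact hx0 ((FractionalIdeal.mem_zero_iff _).1 hx)

/-- Let `R` be an almost Dedekind domain with fraction field `K`.  For each maximal
ideal `M` let `v M : K → ℤ` be the valuation of the DVR `R_M` (characterized on
nonzero elements by additivity and, on `R`, by `v M x ≥ n ↔ x ∈ M ^ n`), and for a
nonzero fractional ideal `I` let `ν I M` be the minimum of `v M` on the nonzero
elements of `I` (so that `I R_M = (M R_M) ^ (ν I M)`).  Then: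
`ν I ≤ ν J` pointwise iff `J ⊆ I`; `ν I = ν J` iff `I = J`; `ν (IJ) = ν I + ν J`;
`ν (I + J) = min (ν I) (ν J)` pointwise; `ν (I ∩ J) = max (ν I) (ν J)` pointwise. -/
theorem stmt4 {R : Type*} [CommRing R] [IsDomain R] (hR : AlmostDedekind R)
    (K : Type*) [Field K] [Algebra R K] [IsFractionRing R K]
    (v : MaximalSpectrum R → K → ℤ)
    (hv_mul : ∀ M : MaximalSpectrum R, ∀ x y : K, x ≠ 0 → y ≠ 0 →
      v M (x * y) = v M x + v M y)
    (hv_int : ∀ M : MaximalSpectrum R, ∀ x : R, x ≠ 0 →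
      ∀ n : ℕ, ((n : ℤ) ≤ v M (algebraMap R K x) ↔ x ∈ M.asIdeal ^ n))
    (ν : FractionalIdeal R⁰ K → MaximalSpectrum R → ℤ)
    (hν : ∀ I : FractionalIdeal R⁰ K, I ≠ 0 → ∀ M : MaximalSpectrum R,
      IsLeast (v M '' {x : K | x ∈ I ∧ x ≠ 0}) (ν I M))
    (I J : FractionalIdeal R⁰ K) (hI : I ≠ 0) (hJ : J ≠ 0) :
    ((∀ M, ν I M ≤ ν J M) ↔ J ≤ I) ∧
    ((∀ M, ν I M = ν J M) ↔ I = J) ∧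
    (∀ M, ν (I * J) M = ν I M + ν J M) ∧
    (∀ M, ν (I ⊔ J) M = min (ν I M) (ν J M)) ∧
    (∀ M, ν (I ⊓ J) M = max (ν I M) (ν J M)) := by
  have hv : ∀ M : MaximalSpectrum R, IsAdicOrder M.asIdeal (v M) := fun M => ⟨hv_mul M, hv_int M⟩
  have le_iff : ∀ {F G : FractionalIdeal R⁰ K}, F ≠ 0 → G ≠ 0 →
      ((∀ M, ν F M ≤ ν G M) ↔ G ≤ F) := fun hF hG =>
    ⟨Submodule.le_of_forall_isLeast_le hR hv (hν _ hF) (fun M => (hν _ hG M).2),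
      fun h M => (hν _ hG M).mono (hν _ hF M) (Set.image_mono fun x hx => ⟨h hx.1, hx.2⟩)⟩
  have ν_eq : ∀ {F : FractionalIdeal R⁰ K} {M n}, IsLeast (v M '' {x | x ∈ F ∧ x ≠ 0}) n →
      ν F M = n := fun h => (hν _ (FractionalIdeal.ne_zero_of_isLeast h) _).unique h
  refine ⟨le_iff hI hJ, ⟨fun h => le_antisymm ((le_iff hJ hI).1 fun M => (h M).ge)
    ((le_iff hI hJ).1 fun M => (h M).le), fun h _ => h ▸ rfl⟩, fun M => ν_eq ?_,
    fun M => ν_eq ?_, fun M => ?_⟩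
  · simpa only [← FractionalIdeal.coe_mul, FractionalIdeal.mem_coe]
      using (hv M).isLeast_mul (hν I hI M) (hν J hJ M)
  · exact (hv M).isLeast_sup (hν I hI M) (hν J hJ M)
  · have := hR M
    exact ν_eq ((hv M).isLeast_inf (hν I hI M) (hν J hJ M))
end

section
/- Let R be an almost Dedekind domain and I a nonzero integral ideal of R. Then ν_I is a bounded function on Max(R) if and only if rad(I)^k ⊆ I for some positive integer k. -/
open IsLocalRing (maximalIdeal)

namespace IsDiscreteValuationRing

variable {S : Type*} [CommRing S] [IsDomain S] [IsDiscreteValuationRing S]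

theorem maximalIdeal_pow_le_pow_iff {a b : ℕ} :
    IsLocalRing.maximalIdeal S ^ a ≤ IsLocalRing.maximalIdeal S ^ b ↔ b ≤ a :=
  (Ideal.pow_right_strictAnti _ (not_a_field S)
    (IsLocalRing.maximalIdeal.isMaximal S).ne_top).le_iff_ge

theorem radical_maximalIdeal_pow_pow_le_iff {n k : ℕ} :
    (IsLocalRing.maximalIdeal S ^ n).radical ^ k ≤ IsLocalRing.maximalIdeal S ^ n ↔
      n ≤ k := by
  rcases n with _ | n
  · simp
  · rw [Ideal.radical_pow _ n.succ_ne_zero, (IsLocalRing.maximalIdeal.isMaximal S).isPrime.radical,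
      maximalIdeal_pow_le_pow_iff]

end IsDiscreteValuationRing

namespace Ideal

variable {R : Type*} [CommRing R] (P : Ideal R) [P.IsMaximal]

theorem le_pow_iff_map_le_maximalIdeal_pow (I : Ideal R) (n : ℕ) :
    I ≤ P ^ n ↔ I.map (algebraMap R (Localization.AtPrime P)) ≤
      maximalIdeal (Localization.AtPrime P) ^ n := by
  rcases n with _ | n
  · simp
  have hprimary : (P ^ (n + 1)).IsPrimary := by
    apply isPrimary_of_isMaximal_radical
    rwa [radical_pow _ n.succ_ne_zero, IsPrime.radical inferInstance]
  have hdisj : Disjoint (P.primeCompl : Set R) ↑(P ^ (n + 1)) := by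
    simpa [primeCompl, ← le_compl_iff_disjoint_left] using pow_le_self n.succ_ne_zero
  rw [← Localization.AtPrime.map_eq_maximalIdeal, ← Ideal.map_pow, map_le_iff_le_comap,
    ← under_def, IsLocalization.under_map_of_isPrimary_disjoint P.primeCompl _ hprimary hdisj]

variable [IsDomain R] [IsDiscreteValuationRing (Localization.AtPrime P)]

theorem map_eq_maximalIdeal_pow_of_le_pow_of_not_le {I : Ideal R} {n : ℕ}
    (hn : I ≤ P ^ n) (hn' : ¬ I ≤ P ^ (n + 1)) :
    I.map (algebraMap R (Localization.AtPrime P)) = maximalIdeal (Localization.AtPrime P) ^ n := by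
  rw [le_pow_iff_map_le_maximalIdeal_pow] at hn hn'
  have hbot : I.map (algebraMap R (Localization.AtPrime P)) ≠ ⊥ := fun h ↦ hn' (h ▸ bot_le)
  obtain ⟨t, ht⟩ := exists_maximalIdeal_pow_eq_of_principal _
    (IsPrincipalIdealRing.principal _) _ hbot
  rw [ht, IsDiscreteValuationRing.maximalIdeal_pow_le_pow_iff] at hn hn'
  rw [ht, show t = n by omega]

theorem map_radical_pow_le_map_iff {I : Ideal R} {n : ℕ}
    (hn : I ≤ P ^ n) (hn' : ¬ I ≤ P ^ (n + 1)) (k : ℕ) :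
    (I.radical ^ k).map (algebraMap R (Localization.AtPrime P)) ≤
        I.map (algebraMap R (Localization.AtPrime P)) ↔ n ≤ k := by
  rw [Ideal.map_pow, IsLocalization.map_radical P.primeCompl,
    map_eq_maximalIdeal_pow_of_le_pow_of_not_le P hn hn',
    IsDiscreteValuationRing.radical_maximalIdeal_pow_pow_le_iff]

end Ideal

theorem AlmostDedekind.radical_pow_le_iff {R : Type*} [CommRing R] [IsDomain R]
    (hR : AlmostDedekind R) {I : Ideal R} {ν : MaximalSpectrum R → ℕ}
    (hν : ∀ M : MaximalSpectrum R, I ≤ M.asIdeal ^ ν M ∧ ¬ I ≤ M.asIdeal ^ (ν M + 1))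
    (k : ℕ) :
    I.radical ^ k ≤ I ↔ ∀ M, ν M ≤ k := by
  have hloc (M : MaximalSpectrum R) := have := hR M
    Ideal.map_radical_pow_le_map_iff M.asIdeal (hν M).1 (hν M).2 k
  refine ⟨fun h M ↦ (hloc M).mp (Ideal.map_mono h), fun h ↦ ?_⟩
  exact Ideal.le_of_localization_maximal fun P hP ↦ (hloc ⟨P, hP⟩).mpr (h ⟨P, hP⟩)

theorem stmt5_general {R : Type*} [CommRing R] [IsDomain R] (hR : AlmostDedekind R)
    (I : Ideal R)
    (ν : MaximalSpectrum R → ℤ)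
    (hν : ∀ M : MaximalSpectrum R, 0 ≤ ν M ∧ I ≤ M.asIdeal ^ (ν M).toNat ∧
      ¬ I ≤ M.asIdeal ^ ((ν M).toNat + 1)) :
    (∃ N : ℤ, ∀ M : MaximalSpectrum R, ν M ≤ N) ↔
      ∃ k : ℕ, 0 < k ∧ I.radical ^ k ≤ I := by
  simp_rw [hR.radical_pow_le_iff (ν := fun M ↦ (ν M).toNat) fun M ↦ (hν M).2]
  constructor
  · rintro ⟨N, hN⟩
    exact ⟨N.toNat + 1, N.toNat.succ_pos, fun M ↦ by have := hN M; omega⟩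
  · rintro ⟨k, -, hk⟩
    exact ⟨k, fun M ↦ by have := hk M; omega⟩

/-- Let `R` be an almost Dedekind domain and `I` a nonzero integral ideal.  For each
maximal ideal `M`, `ν M` is the exponent of `I R_M = (M R_M)^(ν M)`, characterized as
the greatest `n` with `I ⊆ M ^ n`.  Then `ν` is bounded on `Max(R)` if and only if
`rad(I)^k ⊆ I` for some positive integer `k`. -/
theorem stmt5 {R : Type*} [CommRing R] [IsDomain R] (hR : AlmostDedekind R)
    (I : Ideal R) (hI : I ≠ ⊥)
    (ν : MaximalSpectrum R → ℤ)
    (hν : ∀ M : MaximalSpectrum R, 0 ≤ ν M ∧ I ≤ M.asIdeal ^ (ν M).toNat ∧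
      ¬ I ≤ M.asIdeal ^ ((ν M).toNat + 1)) :
    (∃ N : ℤ, ∀ M : MaximalSpectrum R, ν M ≤ N) ↔
      ∃ k : ℕ, 0 < k ∧ I.radical ^ k ≤ I :=
  stmt5_general hR I ν hν
end

section
/- Let R be an almost Dedekind domain and I an invertible fractional ideal of R. Then I = (I ∩ R)·(I⁻¹ ∩ R)⁻¹; moreover I ∩ R and I⁻¹ ∩ R are invertible integral ideals, and if the map ν_I : Max(R) → ℤ is continuous (inverse topology on Max(R), discrete topology on ℤ), then ν_{I∩R} and ν_{I⁻¹∩R} are also continuous. -/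
/-!
Localizations of an almost Dedekind domain at maximal ideals are valuation rings, so every
nonzero finitely generated fractional ideal is invertible: at each maximal `P` one generator
divides all the others in `R_P`, and this produces an element of `J * J⁻¹` outside `P`.
For invertible `I`, the ideals `I + R` and `I⁻¹ + R` are finitely generated, hence invertible,
with inverses `I⁻¹ ∩ R` and `I ∩ R`; as `(I⁻¹ + R) I = I + R`, this gives
`I = (I ∩ R)(I⁻¹ ∩ R)⁻¹`. Finally `ν` turns products into sums and sums into minima, so
`ν_{I ∩ R} = -ν_{I⁻¹ + R} = max(ν_I, 0)` and `ν_{I⁻¹ ∩ R} = max(-ν_I, 0)`, which are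
continuous along with `ν_I`.
-/

open nonZeroDivisors

section LocallyDivides

variable {R : Type*} [CommRing R] {K : Type*} [Field K] [Algebra R K]

lemma exists_common_denominator [IsDomain R] [IsFractionRing R K] (x y : K) :
    ∃ d a b : R, d ≠ 0 ∧
      algebraMap R K d * x = algebraMap R K a ∧ algebraMap R K d * y = algebraMap R K b := by
  obtain ⟨a, s, hs, rfl⟩ := IsFractionRing.div_surjective (A := R) x
  obtain ⟨b, t, ht, rfl⟩ := IsFractionRing.div_surjective (A := R) y
  have hs' := IsFractionRing.to_map_ne_zero_of_mem_nonZeroDivisors (K := K) hs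
  have ht' := IsFractionRing.to_map_ne_zero_of_mem_nonZeroDivisors (K := K) ht
  refine ⟨s * t, a * t, b * s, mul_ne_zero (nonZeroDivisors.ne_zero hs)
    (nonZeroDivisors.ne_zero ht), ?_, ?_⟩ <;> simp only [map_mul] <;> field_simp

variable (P : Ideal R)

/-- For `x ≠ 0` this says that `y / x` lies in the localization `R_P`. -/
def LocallyDivides (x y : K) : Prop :=
  ∃ t ∉ P, ∃ b : R, y * algebraMap R K t = x * algebraMap R K b

variable {P}

lemma LocallyDivides.of_mul_left {d x y : K} (hd : d ≠ 0)
    (h : LocallyDivides P (d * x) (d * y)) : LocallyDivides P x y := by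
  obtain ⟨t, ht, b, hb⟩ := h
  exact ⟨t, ht, b, mul_left_cancel₀ hd (by linear_combination hb)⟩

lemma locallyDivides_algebraMap_or [IsDomain R] [P.IsPrime]
    [ValuationRing (Localization.AtPrime P)] (a b : R) :
    LocallyDivides P (algebraMap R K a) (algebraMap R K b) ∨
      LocallyDivides P (algebraMap R K b) (algebraMap R K a) := by
  have of_mul_eq : ∀ a b : R, ∀ c : Localization.AtPrime P,
      algebraMap R _ a * c = algebraMap R _ b →
        LocallyDivides P (algebraMap R K a) (algebraMap R K b) := by
    intro a b c hc
    obtain ⟨⟨r, t⟩, rfl⟩ := IsLocalization.mk'_surjective P.primeCompl c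
    rw [IsLocalization.mul_mk'_eq_mk'_of_mul, IsLocalization.mk'_eq_iff_eq_mul, ← map_mul] at hc
    have := IsLocalization.injective (Localization.AtPrime P) P.primeCompl_le_nonZeroDivisors hc
    exact ⟨t, t.2, r, by rw [← map_mul, ← map_mul, ← this]⟩
  obtain ⟨c, hc | hc⟩ := ValuationRing.cond (algebraMap R (Localization.AtPrime P) a)
    (algebraMap R _ b)
  exacts [.inl (of_mul_eq a b c hc), .inr (of_mul_eq b a c hc)]

lemma locallyDivides_total [IsDomain R] [IsFractionRing R K] [P.IsPrime]
    [ValuationRing (Localization.AtPrime P)] (x y : K) :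
    LocallyDivides P x y ∨ LocallyDivides P y x := by
  obtain ⟨d, a, b, hd, ha, hb⟩ := exists_common_denominator (R := R) x y
  have hd' : algebraMap R K d ≠ 0 := (map_ne_zero_iff _ (IsFractionRing.injective R K)).mpr hd
  rcases locallyDivides_algebraMap_or (K := K) (P := P) a b with h | h
  · exact .inl (.of_mul_left hd' (ha ▸ hb ▸ h))
  · exact .inr (.of_mul_left hd' (ha ▸ hb ▸ h))

lemma Finset.exists_uniform_locallyDivides [IsDomain R] [IsFractionRing R K] [P.IsPrime]
    [ValuationRing (Localization.AtPrime P)] {s : Finset K} (hs : s.Nonempty) :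
    ∃ x₀ ∈ s, ∃ t ∉ P, ∀ x ∈ s, ∃ b : R,
      x * algebraMap R K t = x₀ * algebraMap R K b := by
  induction hs using Finset.Nonempty.cons_induction with
  | singleton x => exact ⟨x, mem_singleton_self x, 1, P.one_notMem, fun y hy ↦
      ⟨1, by rw [mem_singleton.mp hy]⟩⟩
  | cons y s hy hs ih =>
    obtain ⟨x₀, hx₀, T, hT, hdiv⟩ := ih
    rcases locallyDivides_total (P := P) x₀ y with ⟨t, ht, c, hc⟩ | ⟨t, ht, c, hc⟩
    · refine ⟨x₀, mem_cons_of_mem hx₀, T * t, Ideal.IsPrime.mul_notMem ‹_› hT ht, ?_⟩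
      rintro x hx
      rcases mem_cons.mp hx with rfl | hx
      · exact ⟨c * T, by simp only [map_mul]; linear_combination algebraMap R K T * hc⟩
      · obtain ⟨b, hb⟩ := hdiv x hx
        exact ⟨b * t, by simp only [map_mul]; linear_combination algebraMap R K t * hb⟩
    · refine ⟨y, mem_cons_self y s, T * t, Ideal.IsPrime.mul_notMem ‹_› hT ht, ?_⟩
      rintro x hx
      rcases mem_cons.mp hx with rfl | hx
      · exact ⟨T * t, by simp only [map_mul]⟩
      · obtain ⟨b, hb⟩ := hdiv x hx
        refine ⟨c * b, ?_⟩
        simp only [map_mul]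
        linear_combination algebraMap R K t * hb + algebraMap R K b * hc

end LocallyDivides

namespace FractionalIdeal

variable {R : Type*} [CommRing R] {K : Type*} [Field K] [Algebra R K]

theorem sup_one_ne_zero (J : FractionalIdeal R⁰ K) : J ⊔ 1 ≠ 0 :=
  fun h ↦ one_ne_zero (le_bot_iff.mp (h ▸ le_sup_right : (1 : FractionalIdeal R⁰ K) ≤ 0))

variable [IsDomain R] [IsFractionRing R K] {J : FractionalIdeal R⁰ K}

theorem inv_sup_one (hJ : J ≠ 0) : (J ⊔ 1)⁻¹ = J⁻¹ ⊓ 1 := by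
  refine le_antisymm (le_inf (inv_anti_mono hJ (sup_one_ne_zero J) le_sup_left) ?_) ?_
  · simpa using inv_anti_mono (one_ne_zero : (1 : FractionalIdeal R⁰ K) ≠ 0)
      (sup_one_ne_zero J) le_sup_right
  · rw [inv_eq (I := J ⊔ 1), le_div_iff_mul_le (sup_one_ne_zero J), sup_eq_add, mul_add,
      mul_one, ← sup_eq_add]
    refine sup_le ((mul_le_mul' inf_le_left le_rfl).trans ?_) inf_le_right
    rw [mul_comm, inv_eq]
    exact mul_one_div_le_one

theorem inv_inv_of_mul_inv_eq_one (h : J * J⁻¹ = 1) : J⁻¹⁻¹ = J :=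
  (right_inverse_eq K _ _ (by rwa [mul_comm])).symm

theorem inv_mul_inv_inv_eq_one (h : J * J⁻¹ = 1) : J⁻¹ * J⁻¹⁻¹ = 1 := by
  rwa [inv_inv_of_mul_inv_eq_one h, mul_comm]

theorem inf_one_eq_inv_sup_one_inv (h : J * J⁻¹ = 1) : J ⊓ 1 = (J⁻¹ ⊔ 1)⁻¹ := by
  rw [inv_sup_one (right_ne_zero_of_mul_eq_one h), inv_inv_of_mul_inv_eq_one h]

variable (hR : ∀ M : MaximalSpectrum R, ValuationRing (Localization.AtPrime M.asIdeal))
include hR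

theorem mul_inv_eq_one_of_fg (hJ : J ≠ 0) (hfg : (J : Submodule R K).FG) : J * J⁻¹ = 1 := by
  obtain ⟨A, hA⟩ := le_one_iff_exists_coeIdeal.mp (mul_one_div_le_one (I := J))
  rw [inv_eq, ← hA]
  suffices A = ⊤ by rw [this, coeIdeal_top]
  by_contra hA_top
  obtain ⟨P, hP, hAP⟩ := Ideal.exists_le_maximal A hA_top
  have := hR ⟨P, hP⟩
  obtain ⟨s, hs⟩ := hfg
  obtain ⟨x₁, hx₁s, hx₁⟩ : ∃ x ∈ s, x ≠ 0 := by
    by_contra! h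
    apply hJ
    rw [← coeToSubmodule_inj, coe_zero, ← hs, Submodule.span_eq_bot]
    exact h
  obtain ⟨x₀, hx₀s, t, htP, hdiv⟩ :=
    Finset.exists_uniform_locallyDivides (P := P) ⟨x₁, hx₁s⟩
  have hx₀J : x₀ ∈ J := by rw [← mem_coe, ← hs]; exact Submodule.subset_span hx₀s
  have hx₀ : x₀ ≠ 0 := by
    rintro rfl
    have ht : t ≠ 0 := by rintro rfl; exact htP P.zero_mem
    obtain ⟨b, hb⟩ := hdiv x₁ hx₁s
    simp [hx₁, ht] at hb
  have hy : algebraMap R K t * x₀⁻¹ ∈ J⁻¹ := by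
    refine (mem_inv_iff hJ).mpr fun z hz ↦ ?_
    suffices (J : Submodule R K) ≤ (1 : Submodule R K).comap
        (LinearMap.mulLeft R (algebraMap R K t * x₀⁻¹)) by simpa [mul_assoc] using this hz
    rw [← hs, Submodule.span_le]
    intro x hx
    obtain ⟨b, hb⟩ := hdiv x hx
    refine Submodule.mem_one.mpr ⟨b, ?_⟩
    simp only [LinearMap.mulLeft_apply]
    field_simp
    linear_combination -hb
  have htA : algebraMap R K t ∈ (A : FractionalIdeal R⁰ K) := by
    rw [hA, ← inv_eq]
    convert mul_mem_mul hx₀J hy using 1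
    field_simp
  obtain ⟨t', ht'A, ht'⟩ := (mem_coeIdeal _).mp htA
  exact htP (IsFractionRing.injective R K ht' ▸ hAP ht'A)

theorem sup_one_mul_inv_eq_one (h : J * J⁻¹ = 1) : (J ⊔ 1) * (J ⊔ 1)⁻¹ = 1 := by
  refine mul_inv_eq_one_of_fg hR (sup_one_ne_zero J) ?_
  rw [coe_sup, coe_one, Submodule.one_eq_span]
  exact (fg_of_isUnit J ((mul_inv_cancel_iff_isUnit K).mp h)).sup
    (Submodule.fg_span_singleton 1)

theorem inf_one_mul_inv_eq_one (h : J * J⁻¹ = 1) : (J ⊓ 1) * (J ⊓ 1)⁻¹ = 1 := by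
  have h' := inv_mul_inv_inv_eq_one h
  rw [inf_one_eq_inv_sup_one_inv h,
    inv_inv_of_mul_inv_eq_one (sup_one_mul_inv_eq_one hR h'), mul_comm]
  exact sup_one_mul_inv_eq_one hR h'

theorem eq_inf_one_mul_inv_inf_one_inv (h : J * J⁻¹ = 1) :
    J = (J ⊓ 1) * (J⁻¹ ⊓ 1)⁻¹ := by
  have h' := inv_mul_inv_inv_eq_one h
  have hmul : (J⁻¹ ⊔ 1) * J = J ⊔ 1 := by
    rw [sup_eq_add, sup_eq_add, add_mul, one_mul, mul_comm J⁻¹, h, add_comm]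
  rw [← inv_sup_one (left_ne_zero_of_mul_eq_one h),
    inv_inv_of_mul_inv_eq_one (sup_one_mul_inv_eq_one hR h), inf_one_eq_inv_sup_one_inv h,
    ← hmul, ← mul_assoc, mul_comm _ (J⁻¹ ⊔ 1), sup_one_mul_inv_eq_one hR h', one_mul]

end FractionalIdeal

structure IsAdicValuation {R : Type*} [CommRing R] {K : Type*} [Field K] [Algebra R K]
    (M : MaximalSpectrum R) (v : K → ℤ) : Prop where
  map_mul : ∀ x y : K, x ≠ 0 → y ≠ 0 → v (x * y) = v x + v y
  natCast_le_iff : ∀ x : R, x ≠ 0 →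
    ∀ n : ℕ, ((n : ℤ) ≤ v (algebraMap R K x) ↔ x ∈ M.asIdeal ^ n)

namespace IsAdicValuation

variable {R : Type*} [CommRing R] {K : Type*} [Field K] [Algebra R K]
  {M : MaximalSpectrum R} {v : K → ℤ} (hv : IsAdicValuation M v)
include hv

theorem map_one : v 1 = 0 := by
  have := hv.map_mul 1 1 one_ne_zero one_ne_zero
  rw [mul_one] at this
  omega

theorem algebraMap_nonneg {r : R} (hr : r ≠ 0) : 0 ≤ v (algebraMap R K r) := by
  simpa using (hv.natCast_le_iff r hr 0).mpr (by simp)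

theorem min_le_algebraMap_add {a b : R} (ha : a ≠ 0) (hb : b ≠ 0) (hab : a + b ≠ 0) :
    min (v (algebraMap R K a)) (v (algebraMap R K b)) ≤ v (algebraMap R K (a + b)) := by
  obtain ⟨n, hn⟩ :=
    Int.eq_ofNat_of_zero_le (le_min (hv.algebraMap_nonneg ha) (hv.algebraMap_nonneg hb))
  obtain ⟨han, hbn⟩ := le_min_iff.mp hn.ge
  rw [hn, hv.natCast_le_iff _ hab]
  exact Ideal.add_mem _ ((hv.natCast_le_iff a ha n).mp han) ((hv.natCast_le_iff b hb n).mp hbn)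

theorem min_le_add [IsDomain R] [IsFractionRing R K] {x y : K} (hx : x ≠ 0) (hy : y ≠ 0)
    (hxy : x + y ≠ 0) : min (v x) (v y) ≤ v (x + y) := by
  obtain ⟨d, a, b, hd, ha, hb⟩ := exists_common_denominator (R := R) x y
  have hd' : algebraMap R K d ≠ 0 := (map_ne_zero_iff _ (IsFractionRing.injective R K)).mpr hd
  have hab : algebraMap R K d * (x + y) = algebraMap R K (a + b) := by
    rw [map_add, ← ha, ← hb, mul_add]
  have ne_zero {z : K} {c : R} (hz : z ≠ 0) (hc : algebraMap R K d * z = algebraMap R K c) :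
      c ≠ 0 := by
    rintro rfl
    simp [hd', hz] at hc
  have key := hv.min_le_algebraMap_add (ne_zero hx ha) (ne_zero hy hb) (ne_zero hxy hab)
  rw [← ha, ← hb, ← hab, hv.map_mul _ _ hd' hx, hv.map_mul _ _ hd' hy,
    hv.map_mul _ _ hd' hxy] at key
  omega

variable [IsDomain R] [IsFractionRing R K]

def geSubmodule (n : ℤ) : Submodule R K where
  carrier := {x | x = 0 ∨ n ≤ v x}
  zero_mem' := .inl rfl
  add_mem' {x y} hx hy := by
    by_cases hx0 : x = 0
    · simpa [hx0] using hy
    by_cases hy0 : y = 0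
    · simpa [hy0] using hx
    by_cases hxy : x + y = 0
    · exact .inl hxy
    exact .inr ((le_min (hx.resolve_left hx0) (hy.resolve_left hy0)).trans
      (hv.min_le_add hx0 hy0 hxy))
  smul_mem' r x hx := by
    by_cases hr : r = 0
    · simp [hr]
    by_cases hx0 : x = 0
    · simp [hx0]
    have hr' : algebraMap R K r ≠ 0 := (map_ne_zero_iff _ (IsFractionRing.injective R K)).mpr hr
    refine .inr ?_
    rw [Algebra.smul_def, hv.map_mul _ _ hr' hx0]
    linarith [hv.algebraMap_nonneg hr, hx.resolve_left hx0]

theorem geSubmodule_anti {m n : ℤ} (hmn : m ≤ n) : hv.geSubmodule n ≤ hv.geSubmodule m :=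
  fun _ hx ↦ hx.imp_right hmn.trans

end IsAdicValuation

def IsInfValuation {R : Type*} [CommRing R] {K : Type*} [Field K] [Algebra R K]
    (v : K → ℤ) (ν : FractionalIdeal R⁰ K → ℤ) : Prop :=
  ∀ A : FractionalIdeal R⁰ K, A ≠ 0 → IsLeast (v '' {x : K | x ∈ A ∧ x ≠ 0}) (ν A)

namespace IsInfValuation

variable {R : Type*} [CommRing R] {K : Type*} [Field K] [Algebra R K]
  {v : K → ℤ} {ν : FractionalIdeal R⁰ K → ℤ} (hν : IsInfValuation v ν)
  {A B J : FractionalIdeal R⁰ K}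
include hν

theorem le_apply {x : K} (hx : x ∈ A) (hx0 : x ≠ 0) : ν A ≤ v x :=
  (hν A (fun h ↦ hx0 (by simpa [h] using hx))).2 ⟨x, ⟨hx, hx0⟩, rfl⟩

theorem exists_apply_eq (hA : A ≠ 0) : ∃ x ∈ A, x ≠ 0 ∧ v x = ν A := by
  obtain ⟨x, ⟨hx, hx0⟩, hvx⟩ := (hν A hA).1
  exact ⟨x, hx, hx0, hvx⟩

theorem antitone (hA : A ≠ 0) (hAB : A ≤ B) : ν B ≤ ν A := by
  obtain ⟨x, hx, hx0, hvx⟩ := hν.exists_apply_eq hA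
  exact hvx ▸ hν.le_apply (hAB hx) hx0

variable [IsDomain R] [IsFractionRing R K] {M : MaximalSpectrum R} (hv : IsAdicValuation M v)
include hv

theorem le_apply_iff (hA : A ≠ 0) {n : ℤ} :
    n ≤ ν A ↔ (A : Submodule R K) ≤ hv.geSubmodule n := by
  rw [le_isGLB_iff (hν A hA).isGLB]
  constructor
  · intro h x hx
    by_cases hx0 : x = 0
    · exact .inl hx0
    · exact .inr (h ⟨x, ⟨hx, hx0⟩, rfl⟩)
  · rintro h _ ⟨x, ⟨hx, hx0⟩, rfl⟩
    exact (h hx).resolve_left hx0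

theorem coe_le_geSubmodule (hA : A ≠ 0) : (A : Submodule R K) ≤ hv.geSubmodule (ν A) :=
  (hν.le_apply_iff hv hA).mp le_rfl

theorem map_one : ν 1 = 0 := by
  refine le_antisymm (hv.map_one ▸ hν.le_apply (FractionalIdeal.one_mem_one _) one_ne_zero) ?_
  rw [hν.le_apply_iff hv one_ne_zero]
  intro x hx
  obtain ⟨r, rfl⟩ := (FractionalIdeal.mem_one_iff _).mp hx
  by_cases hr : r = 0
  · exact .inl (by simp [hr])
  · exact .inr (hv.algebraMap_nonneg hr)

theorem map_sup (hA : A ≠ 0) (hB : B ≠ 0) : ν (A ⊔ B) = min (ν A) (ν B) := by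
  refine le_antisymm (le_min (hν.antitone hA le_sup_left) (hν.antitone hB le_sup_right)) ?_
  rw [hν.le_apply_iff hv (ne_bot_of_le_ne_bot hA le_sup_left), FractionalIdeal.coe_sup]
  exact sup_le ((hν.coe_le_geSubmodule hv hA).trans (hv.geSubmodule_anti (min_le_left _ _)))
    ((hν.coe_le_geSubmodule hv hB).trans (hv.geSubmodule_anti (min_le_right _ _)))

theorem map_mul (hA : A ≠ 0) (hB : B ≠ 0) : ν (A * B) = ν A + ν B := by
  obtain ⟨x, hx, hx0, hvx⟩ := hν.exists_apply_eq hA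
  obtain ⟨y, hy, hy0, hvy⟩ := hν.exists_apply_eq hB
  have hxy := FractionalIdeal.mul_mem_mul hx hy
  refine le_antisymm ?_ ?_
  · rw [← hvx, ← hvy, ← hv.map_mul _ _ hx0 hy0]
    exact hν.le_apply hxy (mul_ne_zero hx0 hy0)
  rw [hν.le_apply_iff hv (fun h ↦ mul_ne_zero hx0 hy0 (by simpa [h] using hxy)),
    FractionalIdeal.coe_mul, Submodule.mul_le]
  intro a ha b hb
  by_cases ha0 : a = 0
  · exact .inl (by simp [ha0])
  by_cases hb0 : b = 0
  · exact .inl (by simp [hb0])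
  refine .inr ?_
  rw [hv.map_mul _ _ ha0 hb0]
  exact add_le_add (hν.le_apply ha ha0) (hν.le_apply hb hb0)

theorem map_inv (h : J * J⁻¹ = 1) : ν J⁻¹ = -ν J := by
  have := hν.map_mul hv (left_ne_zero_of_mul_eq_one h) (right_ne_zero_of_mul_eq_one h)
  rw [h, hν.map_one hv] at this
  omega

theorem map_inf_one
    (hR : ∀ M : MaximalSpectrum R, ValuationRing (Localization.AtPrime M.asIdeal))
    (h : J * J⁻¹ = 1) : ν (J ⊓ 1) = max (ν J) 0 := by
  rw [FractionalIdeal.inf_one_eq_inv_sup_one_inv h,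
    hν.map_inv hv (FractionalIdeal.sup_one_mul_inv_eq_one hR
      (FractionalIdeal.inv_mul_inv_inv_eq_one h)),
    hν.map_sup hv (right_ne_zero_of_mul_eq_one h) one_ne_zero, hν.map_one hv, hν.map_inv hv h]
  omega

end IsInfValuation

theorem stmt6_general {R : Type*} [CommRing R] [IsDomain R] (hR : AlmostDedekind R)
    (K : Type*) [Field K] [Algebra R K] [IsFractionRing R K]
    (v : MaximalSpectrum R → K → ℤ)
    (hv_mul : ∀ M : MaximalSpectrum R, ∀ x y : K, x ≠ 0 → y ≠ 0 →
      v M (x * y) = v M x + v M y)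
    (hv_int : ∀ M : MaximalSpectrum R, ∀ x : R, x ≠ 0 →
      ∀ n : ℕ, ((n : ℤ) ≤ v M (algebraMap R K x) ↔ x ∈ M.asIdeal ^ n))
    (ν : FractionalIdeal R⁰ K → MaximalSpectrum R → ℤ)
    (hν : ∀ I : FractionalIdeal R⁰ K, I ≠ 0 → ∀ M : MaximalSpectrum R,
      IsLeast (v M '' {x : K | x ∈ I ∧ x ≠ 0}) (ν I M))
    (I : FractionalIdeal R⁰ K) (hinv : I * I⁻¹ = 1) :
    I = (I ⊓ 1) * (I⁻¹ ⊓ 1)⁻¹ ∧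
    (I ⊓ 1) ≤ 1 ∧ (I ⊓ 1) * (I ⊓ 1)⁻¹ = 1 ∧
    (I⁻¹ ⊓ 1) ≤ 1 ∧ (I⁻¹ ⊓ 1) * (I⁻¹ ⊓ 1)⁻¹ = 1 ∧
    (@Continuous _ _ (invTop R) ⊥ (ν I) →
      @Continuous _ _ (invTop R) ⊥ (ν (I ⊓ 1)) ∧
      @Continuous _ _ (invTop R) ⊥ (ν (I⁻¹ ⊓ 1))) := by
  have hPrufer (M : MaximalSpectrum R) : ValuationRing (Localization.AtPrime M.asIdeal) :=
    have := hR M; inferInstance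
  have hinv' := FractionalIdeal.inv_mul_inv_inv_eq_one hinv
  refine ⟨FractionalIdeal.eq_inf_one_mul_inv_inf_one_inv hPrufer hinv, inf_le_right,
    FractionalIdeal.inf_one_mul_inv_eq_one hPrufer hinv, inf_le_right,
    FractionalIdeal.inf_one_mul_inv_eq_one hPrufer hinv', fun hcont ↦ ?_⟩
  have hνM (M : MaximalSpectrum R) : IsInfValuation (v M) (ν · M) := fun A hA ↦ hν A hA M
  have hvM (M : MaximalSpectrum R) : IsAdicValuation M (v M) := ⟨hv_mul M, hv_int M⟩
  have hν₁ : ν (I ⊓ 1) = (max · 0) ∘ ν I :=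
    funext fun M ↦ (hνM M).map_inf_one (hvM M) hPrufer hinv
  have hν₂ : ν (I⁻¹ ⊓ 1) = (fun n ↦ max (-n) 0) ∘ ν I := funext fun M ↦ by
    rw [(hνM M).map_inf_one (hvM M) hPrufer hinv', (hνM M).map_inv (hvM M) hinv]
    rfl
  rw [hν₁, hν₂]
  exact ⟨@Continuous.comp _ _ _ (invTop R) ⊥ ⊥ _ _ continuous_bot hcont,
    @Continuous.comp _ _ _ (invTop R) ⊥ ⊥ _ _ continuous_bot hcont⟩

/-- Let `R` be an almost Dedekind domain with fraction field `K`, `v M` the valuation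
of `R_M` and `ν I M` the minimum of `v M` on nonzero elements of the nonzero
fractional ideal `I`.  If `I` is invertible, then `I = (I ∩ R)·(I⁻¹ ∩ R)⁻¹`, the
ideals `I ∩ R` and `I⁻¹ ∩ R` are invertible integral ideals, and if `ν I` is
continuous (inverse topology on `Max(R)`, discrete topology on `ℤ`) then so are
`ν (I ∩ R)` and `ν (I⁻¹ ∩ R)`. -/
theorem stmt6 {R : Type*} [CommRing R] [IsDomain R] (hR : AlmostDedekind R)
    (K : Type*) [Field K] [Algebra R K] [IsFractionRing R K]
    (v : MaximalSpectrum R → K → ℤ)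
    (hv_mul : ∀ M : MaximalSpectrum R, ∀ x y : K, x ≠ 0 → y ≠ 0 →
      v M (x * y) = v M x + v M y)
    (hv_int : ∀ M : MaximalSpectrum R, ∀ x : R, x ≠ 0 →
      ∀ n : ℕ, ((n : ℤ) ≤ v M (algebraMap R K x) ↔ x ∈ M.asIdeal ^ n))
    (ν : FractionalIdeal R⁰ K → MaximalSpectrum R → ℤ)
    (hν : ∀ I : FractionalIdeal R⁰ K, I ≠ 0 → ∀ M : MaximalSpectrum R,
      IsLeast (v M '' {x : K | x ∈ I ∧ x ≠ 0}) (ν I M))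
    (I : FractionalIdeal R⁰ K) (hI : I ≠ 0) (hinv : I * I⁻¹ = 1) :
    I = (I ⊓ 1) * (I⁻¹ ⊓ 1)⁻¹ ∧
    (I ⊓ 1) ≤ 1 ∧ (I ⊓ 1) * (I ⊓ 1)⁻¹ = 1 ∧
    (I⁻¹ ⊓ 1) ≤ 1 ∧ (I⁻¹ ⊓ 1) * (I⁻¹ ⊓ 1)⁻¹ = 1 ∧
    (@Continuous _ _ (invTop R) ⊥ (ν I) →
      @Continuous _ _ (invTop R) ⊥ (ν (I ⊓ 1)) ∧
      @Continuous _ _ (invTop R) ⊥ (ν (I⁻¹ ⊓ 1))) :=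
  stmt6_general hR K v hv_mul hv_int ν hν I hinv
end

section
/- Let R be an almost Dedekind domain and I a nonzero integral ideal of R. Then the zero set of ν_I equals D(I) ∩ Max(R) and the support of ν_I (closure in Max(R) with the inverse topology) equals V(I) ∩ Max(R); in particular the support of ν_I is compact and disjoint from the zero set. -/
open Filter Topology

theorem AlmostDedekind.isMaximal_of_isPrime {R : Type*} [CommRing R] [IsDomain R]
    (hR : AlmostDedekind R) {P : Ideal R} (hP : P.IsPrime) (hP0 : P ≠ ⊥) : P.IsMaximal := by
  obtain ⟨M, hM, hPM⟩ := P.exists_le_maximal hP.ne_top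
  have := hR ⟨M, hM⟩
  let S := Localization.AtPrime M
  have hdisj : Disjoint (M.primeCompl : Set R) P :=
    Set.disjoint_left.mpr fun _ hx hxP => hx (hPM hxP)
  have hQ := IsLocalization.isPrime_of_isPrime_disjoint M.primeCompl S P hP hdisj
  have hQ0 : P.map (algebraMap R S) ≠ ⊥ := by
    rwa [Ne, Ideal.map_eq_bot_iff_of_injective
      (IsLocalization.injective S M.primeCompl_le_nonZeroDivisors)]
  have hQM : P.map (algebraMap R S) = IsLocalRing.maximalIdeal S :=
    IsLocalRing.eq_maximalIdeal (hQ.isMaximal hQ0)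
  have hPM : P = M := by
    rw [← IsLocalization.under_map_of_isPrime_disjoint M.primeCompl S hP hdisj, hQM,
      Localization.AtPrime.under_maximalIdeal]
  exact hPM ▸ hM

theorem Ideal.eq_zero_iff_not_le_of_le_pow_of_not_le_pow_succ {R : Type*} [CommSemiring R]
    {I M : Ideal R} {n : ℕ} (hle : I ≤ M ^ n) (hnle : ¬ I ≤ M ^ (n + 1)) :
    n = 0 ↔ ¬ I ≤ M := by
  refine ⟨fun hn => by simpa [hn] using hnle, fun hIM => ?_⟩
  by_contra hn
  exact hIM (hle.trans (Ideal.pow_le_self hn))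

namespace MaximalSpectrum

variable {R : Type*} [CommRing R]

theorem isOpen_invTop_setOf_le {J : Ideal R} (hJ : J.FG) :
    IsOpen[invTop R] {M : MaximalSpectrum R | J ≤ M.asIdeal} :=
  TopologicalSpace.isOpen_generateFrom_of_mem ⟨J, hJ, rfl⟩

-- For `a ∈ I \ M` pick `s = 1 - y a ∈ M`; no maximal ideal contains both `a` and `s`.
theorem isOpen_invTop_setOf_not_le (I : Ideal R) :
    IsOpen[invTop R] {M : MaximalSpectrum R | ¬ I ≤ M.asIdeal} := by
  refine (@isOpen_iff_forall_mem_open _ (invTop R) _).mpr fun M hM => ?_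
  obtain ⟨a, haI, haM⟩ := SetLike.not_le_iff_exists.mp hM
  obtain ⟨y, s, hsM, hys⟩ := M.isMaximal.exists_inv haM
  refine ⟨{N | Ideal.span {s} ≤ N.asIdeal}, fun N hsN hIN => ?_,
    isOpen_invTop_setOf_le (Submodule.fg_span_singleton s),
    (Ideal.span_singleton_le_iff_mem _).mpr hsM⟩
  have hsN : s ∈ N.asIdeal := (Ideal.span_singleton_le_iff_mem _).mp hsN
  exact N.isMaximal.ne_top <| (Ideal.eq_top_iff_one _).mpr <|
    hys ▸ add_mem (N.asIdeal.mul_mem_left y (hIN haI)) hsN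

theorem isClosed_invTop_setOf_le (I : Ideal R) :
    IsClosed[invTop R] {M : MaximalSpectrum R | I ≤ M.asIdeal} := by
  simpa only [Set.compl_ofPred, not_not] using
    @IsOpen.isClosed_compl _ (invTop R) _ (isOpen_invTop_setOf_not_le I)

def limitIdeal (f : Ultrafilter (MaximalSpectrum R)) : Ideal R where
  carrier := {a | ∀ᶠ M : MaximalSpectrum R in f, a ∈ M.asIdeal}
  add_mem' ha hb := (ha.and hb).mono fun _ h => add_mem h.1 h.2
  zero_mem' := .of_forall fun M => M.asIdeal.zero_mem
  smul_mem' c _ ha := ha.mono fun M h => M.asIdeal.mul_mem_left c h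

theorem mem_limitIdeal {f : Ultrafilter (MaximalSpectrum R)} {a : R} :
    a ∈ limitIdeal f ↔ ∀ᶠ M in (f : Filter (MaximalSpectrum R)), a ∈ M.asIdeal := Iff.rfl

theorem limitIdeal_isPrime (f : Ultrafilter (MaximalSpectrum R)) : (limitIdeal f).IsPrime := by
  refine ⟨fun h => ?_, fun {a b} hab => ?_⟩
  · obtain ⟨M, hM⟩ := (mem_limitIdeal.mp ((Ideal.eq_top_iff_one _).mp h)).exists
    exact M.isMaximal.ne_top ((Ideal.eq_top_iff_one _).mpr hM)
  · simp only [mem_limitIdeal, ← Ultrafilter.eventually_or] at hab ⊢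
    exact hab.mono fun M h => M.isMaximal.isPrime.mem_or_mem h

theorem le_limitIdeal {f : Ultrafilter (MaximalSpectrum R)} {I : Ideal R}
    (hf : ∀ᶠ M in (f : Filter (MaximalSpectrum R)), I ≤ M.asIdeal) : I ≤ limitIdeal f :=
  fun _ ha => hf.mono fun _ hM => hM ha

theorem le_nhds_of_asIdeal_le_limitIdeal {f : Ultrafilter (MaximalSpectrum R)}
    {M : MaximalSpectrum R} (hM : M.asIdeal ≤ limitIdeal f) :
    (f : Filter (MaximalSpectrum R)) ≤ @nhds _ (invTop R) M := by
  rw [invTop, TopologicalSpace.nhds_generateFrom, le_iInf₂_iff]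
  rintro _ ⟨hMJ, J, ⟨T, rfl⟩, rfl⟩
  simp only [le_principal_iff, Ideal.span_le]
  exact (eventually_all_finset T).mpr fun a ha => hM (hMJ (Ideal.subset_span ha))

theorem isCompact_invTop_setOf_le {I : Ideal R}
    (hI : ∀ P : Ideal R, P.IsPrime → I ≤ P → P.IsMaximal) :
    @IsCompact _ (invTop R) {M : MaximalSpectrum R | I ≤ M.asIdeal} := by
  refine (@isCompact_iff_ultrafilter_le_nhds _ (invTop R) _).mpr fun f hf => ?_
  have hIf : I ≤ limitIdeal f := le_limitIdeal (le_principal_iff.mp hf)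
  exact ⟨⟨limitIdeal f, hI _ (limitIdeal_isPrime f) hIf⟩, hIf,
    le_nhds_of_asIdeal_le_limitIdeal le_rfl⟩

end MaximalSpectrum

/-- Let `R` be an almost Dedekind domain, `I` a nonzero integral ideal, and `ν M` the
exponent with `I R_M = (M R_M)^(ν M)` (the greatest `n` with `I ⊆ M^n`).  Then the
zero set of `ν` is `D(I) ∩ Max(R)`, the support of `ν` (closure of the non-zero set
in the inverse topology) is `V(I) ∩ Max(R)`, and in particular the support is
compact and disjoint from the zero set. -/
theorem stmt7 {R : Type*} [CommRing R] [IsDomain R] (hR : AlmostDedekind R)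
    (I : Ideal R) (hI : I ≠ ⊥)
    (ν : MaximalSpectrum R → ℤ)
    (hν : ∀ M : MaximalSpectrum R, 0 ≤ ν M ∧ I ≤ M.asIdeal ^ (ν M).toNat ∧
      ¬ I ≤ M.asIdeal ^ ((ν M).toNat + 1)) :
    {M : MaximalSpectrum R | ν M = 0} = {M | ¬ I ≤ M.asIdeal} ∧
    @closure _ (invTop R) {M : MaximalSpectrum R | ν M ≠ 0} = {M | I ≤ M.asIdeal} ∧
    @IsCompact _ (invTop R) (@closure _ (invTop R) {M : MaximalSpectrum R | ν M ≠ 0}) ∧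
    Disjoint (@closure _ (invTop R) {M : MaximalSpectrum R | ν M ≠ 0})
      {M : MaximalSpectrum R | ν M = 0} := by
  have hzero : {M : MaximalSpectrum R | ν M = 0} = {M | ¬ I ≤ M.asIdeal} := by
    ext M
    obtain ⟨hν0, hle, hnle⟩ := hν M
    rw [Set.mem_ofPred_eq, Set.mem_ofPred_eq,
      ← Ideal.eq_zero_iff_not_le_of_le_pow_of_not_le_pow_succ hle hnle]
    omega
  have hsupport : {M : MaximalSpectrum R | ν M ≠ 0} = {M | I ≤ M.asIdeal} := by
    simpa only [Set.compl_ofPred, not_not] using congrArg compl hzero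
  have hclosure :
      @closure _ (invTop R) {M : MaximalSpectrum R | ν M ≠ 0} = {M | I ≤ M.asIdeal} := by
    rw [hsupport]
    exact @IsClosed.closure_eq _ (invTop R) _ (MaximalSpectrum.isClosed_invTop_setOf_le I)
  refine ⟨hzero, hclosure, hclosure ▸ MaximalSpectrum.isCompact_invTop_setOf_le fun P hP hIP =>
    hR.isMaximal_of_isPrime hP (ne_bot_of_le_ne_bot hI hIP), ?_⟩
  rw [hclosure, hzero]
  exact Set.disjoint_left.mpr fun _ hIM hnIM => hnIM hIM
end

section
/- Let R be an almost Dedekind domain and I a radical ideal of R. The following are equivalent: (i) ν_I : Max(R) → ℤ is continuous (inverse topology on Max(R), discrete topology on ℤ); (ii) V(I) ∩ Max(R) is clopen in Max(R) with the inverse topology; (iii) I is the radical of a finitely generated ideal of R. -/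
/-!
A nonzero radical ideal of the DVR `R_M` is `R_M` or its maximal ideal, never inside its square,
so `ν` is the indicator function of `V(I) = {M | I ≤ M}`; this gives (i) ⇔ (ii).

The sets `V(J)`, `J` finitely generated, are open in the inverse topology, and so are the sets
`D(b) = {M | b ∉ M} = ⋃ c, V(1 - c b)`; hence (iii) ⇒ (ii). Conversely, nonzero primes of `R`
are maximal, so for `0 ≠ a ∈ I` the set `V(a)` is compact: an ultrafilter on it converges to
the ideal of the elements lying in almost every member of it. If `V(I)` is open, `V(a) \ V(I)`
is then covered by finitely many `D(b)` with `b ∈ I`, and `I` is the radical of the ideal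
generated by `a` and these `b`.
-/

open Topology

open scoped Classical in
theorem Ideal.eq_ite_of_le_pow_of_not_le_pow_succ {R : Type*} [CommSemiring R]
    {I M : Ideal R} {n : ℕ} (hle : I ≤ M ^ n) (hnle : ¬ I ≤ M ^ (n + 1))
    (hsq : ¬ I ≤ M ^ 2) : n = if I ≤ M then 1 else 0 := by
  match n with
  | 0 => simpa using hnle
  | 1 => simpa using hle
  | n + 2 => exact (hsq (hle.trans (Ideal.pow_le_pow_right (by omega)))).elim

theorem IsDiscreteValuationRing.not_le_maximalIdeal_sq {A : Type*} [CommRing A] [IsDomain A]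
    [IsDiscreteValuationRing A] {J : Ideal A} (hJ : J ≠ ⊥) (hrad : J.IsRadical) :
    ¬ J ≤ IsLocalRing.maximalIdeal A ^ 2 := by
  intro hle
  obtain ⟨ϖ, hϖ⟩ := exists_irreducible A
  obtain ⟨n, rfl⟩ := ideal_eq_span_pow_irreducible hJ hϖ
  have hϖJ : ϖ ∈ Ideal.span {ϖ ^ n} := hrad ⟨n, Ideal.mem_span_singleton_self _⟩
  rw [hϖ.maximalIdeal_eq, Ideal.span_singleton_pow, Ideal.span_singleton_le_span_singleton] at hle
  have : ϖ ^ 2 ∣ ϖ ^ 1 := by simpa using hle.trans (Ideal.mem_span_singleton.mp hϖJ)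
  exact absurd ((pow_dvd_pow_iff hϖ.ne_zero hϖ.not_isUnit).mp this) (by norm_num)

namespace AlmostDedekind

variable {R : Type*} [CommRing R] [IsDomain R]

theorem isMaximal_of_isPrime_s10 (hR : AlmostDedekind R) {P : Ideal R} [hP : P.IsPrime]
    (hP0 : P ≠ ⊥) : P.IsMaximal := by
  obtain ⟨M, hM, hPM⟩ := P.exists_le_maximal hP.ne_top
  have := hR ⟨M, hM⟩
  let A := Localization.AtPrime M
  have hdisj : Disjoint (M.primeCompl : Set R) P :=
    Set.disjoint_left.mpr fun _ hx hxP => hx (hPM hxP)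
  have : (P.map (algebraMap R A)).IsPrime :=
    IsLocalization.isPrime_of_isPrime_disjoint _ A P hP hdisj
  have hmap : P.map (algebraMap R A) = IsLocalRing.maximalIdeal A :=
    IsLocalRing.eq_maximalIdeal <| IsPrime.to_maximal_ideal <|
      (Ideal.map_eq_bot_iff_of_injective
        (IsLocalization.injective A M.primeCompl_le_nonZeroDivisors)).not.mpr hP0
  have hcomap := IsLocalization.under_map_of_isPrime_disjoint M.primeCompl A hP hdisj
  rw [hmap, Localization.AtPrime.under_maximalIdeal] at hcomap
  exact hcomap ▸ hM

theorem not_le_sq (hR : AlmostDedekind R) {I : Ideal R} (hI : I ≠ ⊥) (hrad : I.IsRadical)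
    (M : MaximalSpectrum R) : ¬ I ≤ M.asIdeal ^ 2 := by
  have := hR M
  let A := Localization.AtPrime M.asIdeal
  have hmap_rad : (I.map (algebraMap R A)).IsRadical := by
    rw [Ideal.IsRadical, ← IsLocalization.map_radical M.asIdeal.primeCompl, hrad.radical]
  have hmap_ne : I.map (algebraMap R A) ≠ ⊥ :=
    (Ideal.map_eq_bot_iff_of_injective
      (IsLocalization.injective A M.asIdeal.primeCompl_le_nonZeroDivisors)).not.mpr hI
  intro hle
  apply IsDiscreteValuationRing.not_le_maximalIdeal_sq hmap_ne hmap_rad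
  rw [← Localization.AtPrime.map_eq_maximalIdeal, ← Ideal.map_pow]
  exact Ideal.map_mono hle

end AlmostDedekind

theorem continuous_indicator_one_iff_isClopen {X Y : Type*} [TopologicalSpace X]
    [TopologicalSpace Y] [DiscreteTopology Y] [Zero Y] [One Y] [NeZero (1 : Y)] (s : Set X) :
    Continuous (s.indicator (1 : X → Y)) ↔ IsClopen s := by
  refine ⟨fun h => ?_, fun hs => hs.continuous_indicator continuous_const⟩
  have hpre : s.indicator (1 : X → Y) ⁻¹' {1} = s := by
    ext x
    by_cases hx : x ∈ s <;> simp [hx]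
  exact hpre ▸ (isClopen_discrete {1}).preimage h

namespace invTop

variable {R : Type*} [CommRing R]

theorem isOpen_setOf_le {J : Ideal R} (hJ : J.FG) :
    IsOpen[invTop R] {M : MaximalSpectrum R | J ≤ M.asIdeal} :=
  TopologicalSpace.isOpen_generateFrom_of_mem ⟨J, hJ, rfl⟩

theorem setOf_notMem_eq_iUnion (b : R) :
    {M : MaximalSpectrum R | b ∉ M.asIdeal} =
      ⋃ c : R, {M : MaximalSpectrum R | Ideal.span {1 - c * b} ≤ M.asIdeal} := by
  ext M
  simp only [Set.mem_ofPred_eq, Set.mem_iUnion, Ideal.span_singleton_le_iff_mem]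
  constructor
  · intro hb
    obtain ⟨c, m, hm, hcm⟩ := M.isMaximal.exists_inv hb
    exact ⟨c, by rwa [← hcm, add_sub_cancel_left]⟩
  · rintro ⟨c, hc⟩ hb
    exact M.isMaximal.ne_top <| (Ideal.eq_top_iff_one _).mpr <| by
      simpa using M.asIdeal.add_mem hc (M.asIdeal.mul_mem_left c hb)

theorem isOpen_setOf_notMem (b : R) :
    IsOpen[invTop R] {M : MaximalSpectrum R | b ∉ M.asIdeal} := by
  let _ := invTop R
  rw [setOf_notMem_eq_iUnion]
  exact isOpen_iUnion fun c => isOpen_setOf_le (Submodule.fg_span_singleton _)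

theorem isOpen_setOf_not_le (J : Ideal R) :
    IsOpen[invTop R] {M : MaximalSpectrum R | ¬ J ≤ M.asIdeal} := by
  have hunion : {M : MaximalSpectrum R | ¬ J ≤ M.asIdeal} =
      ⋃ b ∈ J, {M : MaximalSpectrum R | b ∉ M.asIdeal} := by
    ext M
    simp [SetLike.not_le_iff_exists]
  let _ := invTop R
  rw [hunion]
  exact isOpen_biUnion fun b _ => isOpen_setOf_notMem b

theorem isClopen_setOf_le {J : Ideal R} (hJ : J.FG) :
    @IsClopen _ (invTop R) {M : MaximalSpectrum R | J ≤ M.asIdeal} :=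
  let _ := invTop R
  ⟨⟨by simpa [Set.compl_ofPred] using isOpen_setOf_not_le J⟩, isOpen_setOf_le hJ⟩

def ultrafilterIdeal (U : Ultrafilter (MaximalSpectrum R)) : Ideal R where
  carrier := {f | {M : MaximalSpectrum R | f ∈ M.asIdeal} ∈ U}
  add_mem' hx hy := Filter.mem_of_superset (Filter.inter_mem hx hy) fun M hM =>
    M.asIdeal.add_mem hM.1 hM.2
  zero_mem' := Filter.mem_of_superset Filter.univ_mem fun M _ => M.asIdeal.zero_mem
  smul_mem' c _ hx := Filter.mem_of_superset hx fun M hM => M.asIdeal.mul_mem_left c hM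

theorem mem_ultrafilterIdeal {U : Ultrafilter (MaximalSpectrum R)} {f : R} :
    f ∈ ultrafilterIdeal U ↔ {M : MaximalSpectrum R | f ∈ M.asIdeal} ∈ U :=
  Iff.rfl

theorem isPrime_ultrafilterIdeal (U : Ultrafilter (MaximalSpectrum R)) :
    (ultrafilterIdeal U).IsPrime := by
  refine ⟨fun h => ?_, fun {x y} hxy => ?_⟩
  · have h1 : (1 : R) ∈ ultrafilterIdeal U := h ▸ Submodule.mem_top
    have hempty : {M : MaximalSpectrum R | (1 : R) ∈ M.asIdeal} = ∅ :=
      Set.eq_empty_of_forall_notMem fun M hM =>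
        M.isMaximal.ne_top ((Ideal.eq_top_iff_one _).mpr hM)
    exact U.empty_notMem (hempty ▸ mem_ultrafilterIdeal.mp h1)
  · have hunion : {M : MaximalSpectrum R | x * y ∈ M.asIdeal} =
        {M | x ∈ M.asIdeal} ∪ {M | y ∈ M.asIdeal} := by
      ext M
      exact M.isMaximal.isPrime.mul_mem_iff_mem_or_mem
    rw [mem_ultrafilterIdeal, hunion, Ultrafilter.union_mem_iff] at hxy
    exact hxy

theorem le_nhds_of_isMaximal_ultrafilterIdeal {U : Ultrafilter (MaximalSpectrum R)}
    (hU : (ultrafilterIdeal U).IsMaximal) :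
    (U : Filter (MaximalSpectrum R)) ≤ @nhds _ (invTop R) ⟨_, hU⟩ := by
  rw [invTop, TopologicalSpace.nhds_generateFrom]
  refine le_iInf₂ fun s ⟨hUs, J, ⟨T, hT⟩, hs⟩ => ?_
  subst hT hs
  simp only [Ideal.span_le, Filter.le_principal_iff]
  exact (Filter.eventually_all_finset T).mpr fun f hf => hUs (Ideal.subset_span hf)

theorem isCompact_setOf_mem {a : R} (ha : ∀ P : Ideal R, P.IsPrime → a ∈ P → P.IsMaximal) :
    @IsCompact _ (invTop R) {M : MaximalSpectrum R | a ∈ M.asIdeal} := by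
  let _ := invTop R
  refine isCompact_iff_ultrafilter_le_nhds.mpr fun U hU => ?_
  have haU : a ∈ ultrafilterIdeal U := Filter.le_principal_iff.mp hU
  have hmax := ha _ (isPrime_ultrafilterIdeal U) haU
  exact ⟨⟨_, hmax⟩, haU, le_nhds_of_isMaximal_ultrafilterIdeal hmax⟩

theorem exists_fg_radical_eq {I : Ideal R} {a : R} (haI : a ∈ I)
    (ha : ∀ P : Ideal R, P.IsPrime → a ∈ P → P.IsMaximal)
    (hI : IsOpen[invTop R] {M : MaximalSpectrum R | I ≤ M.asIdeal}) :
    ∃ J : Ideal R, J.FG ∧ J.radical = I.radical := by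
  let _ := invTop R
  have hK : IsCompact ({M : MaximalSpectrum R | a ∈ M.asIdeal} ∩ {M | I ≤ M.asIdeal}ᶜ) :=
    (isCompact_setOf_mem ha).inter_right hI.isClosed_compl
  obtain ⟨t, htI, htfin, hcover⟩ := hK.elim_finite_subcover_image (b := (I : Set R))
    (c := fun b => {M | b ∉ M.asIdeal}) (fun b _ => isOpen_setOf_notMem b) <| by
      rintro M ⟨-, hM⟩
      simpa [SetLike.not_le_iff_exists] using hM
  refine ⟨Ideal.span (insert a t), Submodule.fg_span (htfin.insert a),
    le_antisymm (Ideal.radical_mono (Ideal.span_le.mpr (Set.insert_subset haI htI))) ?_⟩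
  rw [Ideal.radical_le_radical_iff, Ideal.radical_eq_sInf]
  refine le_sInf fun P ⟨hJP, hP⟩ => ?_
  have haP : a ∈ P := hJP (Ideal.subset_span (Set.mem_insert a t))
  by_contra hIP
  obtain ⟨b, hbt, hbP⟩ := Set.mem_iUnion₂.mp
    (hcover (show (⟨P, ha P hP haP⟩ : MaximalSpectrum R) ∈ _ from ⟨haP, hIP⟩))
  exact hbP (hJP (Ideal.subset_span (Set.mem_insert_of_mem a hbt)))

end invTop

/-- Let `R` be an almost Dedekind domain, `I` a nonzero radical ideal and `ν M` the
exponent with `I R_M = (M R_M)^(ν M)`.  The following are equivalent: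
(i) `ν` is continuous (inverse topology on `Max(R)`, discrete topology on `ℤ`);
(ii) `V(I) ∩ Max(R)` is clopen in the inverse topology;
(iii) `I` is the radical of a finitely generated ideal. -/
theorem stmt10 {R : Type*} [CommRing R] [IsDomain R] (hR : AlmostDedekind R)
    (I : Ideal R) (hI : I ≠ ⊥) (hrad : I.IsRadical)
    (ν : MaximalSpectrum R → ℤ)
    (hν : ∀ M : MaximalSpectrum R, 0 ≤ ν M ∧ I ≤ M.asIdeal ^ (ν M).toNat ∧
      ¬ I ≤ M.asIdeal ^ ((ν M).toNat + 1)) :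
    (@Continuous _ _ (invTop R) ⊥ ν ↔
      @IsClopen _ (invTop R) {M : MaximalSpectrum R | I ≤ M.asIdeal}) ∧
    (@IsClopen _ (invTop R) {M : MaximalSpectrum R | I ≤ M.asIdeal} ↔
      ∃ J : Ideal R, J.FG ∧ I = J.radical) := by
  set S := {M : MaximalSpectrum R | I ≤ M.asIdeal}
  have hνS : ν = S.indicator 1 := funext fun M => by
    obtain ⟨h0, hle, hnle⟩ := hν M
    rw [← Int.toNat_of_nonneg h0,
      Ideal.eq_ite_of_le_pow_of_not_le_pow_succ hle hnle (hR.not_le_sq hI hrad M)]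
    by_cases hM : I ≤ M.asIdeal <;> simp [S, hM]
  refine ⟨hνS ▸ @continuous_indicator_one_iff_isClopen _ ℤ (invTop R) ⊥ ⟨rfl⟩ _ _ _ S,
    fun hS => ?_, ?_⟩
  · obtain ⟨a, haI, ha0⟩ := Submodule.exists_mem_ne_zero_of_ne_bot hI
    have ha (P : Ideal R) (hP : P.IsPrime) (haP : a ∈ P) : P.IsMaximal :=
      hR.isMaximal_of_isPrime_s10 fun h => ha0 (by simpa [h] using haP)
    obtain ⟨J, hJ, hJI⟩ := invTop.exists_fg_radical_eq haI ha hS.2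
    exact ⟨J, hJ, hJI.trans hrad.radical |>.symm⟩
  · rintro ⟨J, hJ, hIJ⟩
    have hSJ : S = {M | J ≤ M.asIdeal} := by
      ext M
      simpa [S, hIJ] using M.isMaximal.isPrime.isRadical.radical_le_iff
    exact hSJ ▸ invTop.isClopen_setOf_le hJ
end

section
/- Let R be a one-dimensional Prüfer domain and X a nonempty closed subset of Max(R) in the inverse topology. Let T := ⋂_{P ∈ X} R_P. Then the maximal ideals of T are exactly the extensions PT for P ∈ X. -/
/-!
For `P ∈ X` the ring `T` sits inside `R_P`, so every `t ∈ T` satisfies `s t = r` with `s ∉ P`: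
either `r ∈ P` and `t ∈ PT`, or `r ∉ P` and `t` is invertible modulo `PT`. Clearing denominators
also shows `PT ⊆ PR_P ∩ T`, so `PT` is proper, hence maximal.

Conversely, a nonzero maximal ideal `Q` of `T` contracts to a nonzero prime, hence maximal, ideal
`M` of `R`. If `M ∉ X`, closedness of `X` in the inverse topology yields a finitely generated
`I ⊆ M` contained in no `P ∈ X`. Every `x ∈ I⁻¹` is then in each `R_P` (multiply by an element
of `I \ P`), so `I⁻¹ ⊆ T` and `1 ∈ I I⁻¹ ⊆ IT ⊆ Q`. If `Q = 0`, then `T` is a field and any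
proper ideal `PT` is `Q`.
-/

open nonZeroDivisors

namespace Ideal

variable {R A : Type*} [CommRing R] [CommRing A] [Algebra R A] {P : Ideal R}

theorem mem_map_of_algebraMap_mul_eq [hP : P.IsMaximal] {r s : R} {t : A} (hs : s ∉ P) (hr : r ∈ P)
    (h : algebraMap R A s * t = algebraMap R A r) : t ∈ P.map (algebraMap R A) := by
  obtain ⟨u, p, hp, hup⟩ := hP.exists_inv hs
  have ht : t = algebraMap R A (u * r) + algebraMap R A p * t := by
    have h1 : algebraMap R A u * algebraMap R A s + algebraMap R A p = 1 := by
      rw [← map_mul, ← map_add, hup, map_one]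
    rw [map_mul]
    linear_combination algebraMap R A u * h - t * h1
  rw [ht]
  exact add_mem (mem_map_of_mem _ (P.mul_mem_left u hr))
    (mul_mem_right t _ (mem_map_of_mem _ hp))

variable (hA : ∀ t : A, ∃ r s : R, s ∉ P ∧ algebraMap R A s * t = algebraMap R A r)
include hA

theorem exists_algebraMap_mul_eq_of_mem_map [hP : P.IsPrime] {t : A}
    (ht : t ∈ P.map (algebraMap R A)) :
    ∃ r ∈ P, ∃ s ∉ P, algebraMap R A s * t = algebraMap R A r := by
  induction ht using Submodule.span_induction with
  | mem x hx =>
    obtain ⟨p, hp, rfl⟩ := hx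
    exact ⟨p, hp, 1, P.one_notMem, by rw [map_one, one_mul]⟩
  | zero => exact ⟨0, P.zero_mem, 1, P.one_notMem, by simp⟩
  | add x y _ _ hx hy =>
    obtain ⟨r₁, hr₁, s₁, hs₁, h₁⟩ := hx
    obtain ⟨r₂, hr₂, s₂, hs₂, h₂⟩ := hy
    refine ⟨s₂ * r₁ + s₁ * r₂, add_mem (P.mul_mem_left _ hr₁) (P.mul_mem_left _ hr₂), s₁ * s₂,
      fun h => (hP.mem_or_mem h).elim hs₁ hs₂, ?_⟩
    simp only [map_mul, map_add]
    linear_combination algebraMap R A s₂ * h₁ + algebraMap R A s₁ * h₂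
  | smul c x _ hx =>
    obtain ⟨r, hr, s, hs, h⟩ := hx
    obtain ⟨r', s', hs', h'⟩ := hA c
    refine ⟨r' * r, P.mul_mem_left _ hr, s' * s,
      fun h => (hP.mem_or_mem h).elim hs' hs, ?_⟩
    simp only [smul_eq_mul, map_mul]
    linear_combination algebraMap R A s * x * h' + algebraMap R A r' * h

theorem map_ne_top_of_forall_exists_mul_eq [P.IsPrime]
    (hinj : Function.Injective (algebraMap R A)) : P.map (algebraMap R A) ≠ ⊤ := by
  intro htop
  obtain ⟨r, hr, s, hs, h⟩ :=
    exists_algebraMap_mul_eq_of_mem_map hA (htop ▸ Submodule.mem_top (x := 1))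
  rw [mul_one] at h
  exact hs (hinj h ▸ hr)

theorem isMaximal_map_of_forall_exists_mul_eq [hP : P.IsMaximal]
    (hinj : Function.Injective (algebraMap R A)) : (P.map (algebraMap R A)).IsMaximal := by
  refine isMaximal_iff.mpr
    ⟨(ne_top_iff_one _).mp (map_ne_top_of_forall_exists_mul_eq hA hinj), fun J t hle ht htJ => ?_⟩
  obtain ⟨r, s, hs, h⟩ := hA t
  have hr : r ∉ P := fun hr => ht (mem_map_of_algebraMap_mul_eq hs hr h)
  obtain ⟨v, p, hp, hvp⟩ := hP.exists_inv hr
  have hone : (1 : A) = algebraMap R A v * (algebraMap R A s * t) + algebraMap R A p := by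
    have h1 : algebraMap R A v * algebraMap R A r + algebraMap R A p = 1 := by
      rw [← map_mul, ← map_add, hvp, map_one]
    linear_combination -algebraMap R A v * h - h1
  rw [hone]
  exact add_mem (J.mul_mem_left _ (J.mul_mem_left _ htJ)) (hle (mem_map_of_mem _ hp))

end Ideal

theorem exists_fg_le_subset_of_isOpen_invTop {R : Type*} [CommRing R]
    {U : Set (MaximalSpectrum R)} (hU : @IsOpen _ (invTop R) U) {M : MaximalSpectrum R}
    (hM : M ∈ U) :
    ∃ I : Ideal R, I.FG ∧ I ≤ M.asIdeal ∧ {N : MaximalSpectrum R | I ≤ N.asIdeal} ⊆ U := by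
  induction hU generalizing M with
  | basic u hu =>
    obtain ⟨I, hI, rfl⟩ := hu
    exact ⟨I, hI, hM, subset_rfl⟩
  | univ => exact ⟨⊥, Submodule.fg_bot, bot_le, Set.subset_univ _⟩
  | inter u v _ _ ihu ihv =>
    obtain ⟨I, hI, hIM, hIu⟩ := ihu hM.1
    obtain ⟨J, hJ, hJM, hJv⟩ := ihv hM.2
    refine ⟨I ⊔ J, Submodule.FG.sup hI hJ, sup_le hIM hJM, fun N (hN : I ⊔ J ≤ N.asIdeal) => ?_⟩
    exact ⟨hIu (le_sup_left.trans hN), hJv (le_sup_right.trans hN)⟩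
  | sUnion S _ ih =>
    obtain ⟨u, hu, hMu⟩ := hM
    obtain ⟨I, hI, hIM, hIu⟩ := ih u hu hMu
    exact ⟨I, hI, hIM, fun N hN => ⟨u, hu, hIu hN⟩⟩

section Overring

variable {R K : Type*} [CommRing R] [IsDomain R] [Field K] [Algebra R K] [IsFractionRing R K]
  {T : Subalgebra R K} {X : Set (MaximalSpectrum R)}

theorem mem_of_mem_inv_of_forall_not_le
    (hT : ∀ x : K, (∀ P ∈ X, ∃ r s : R, s ∉ P.asIdeal ∧
      algebraMap R K s * x = algebraMap R K r) → x ∈ T)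
    {I : Ideal R} (hI : I ≠ ⊥) (hIX : ∀ P ∈ X, ¬ I ≤ P.asIdeal) {x : K}
    (hx : x ∈ (I : FractionalIdeal R⁰ K)⁻¹) : x ∈ T := by
  refine hT x fun P hP => ?_
  obtain ⟨s, hsI, hsP⟩ := SetLike.not_le_iff_exists.mp (hIX P hP)
  have hI₀ : (I : FractionalIdeal R⁰ K) ≠ 0 := FractionalIdeal.coeIdeal_ne_zero.mpr hI
  obtain ⟨r, hr⟩ := (FractionalIdeal.mem_one_iff R⁰).mp <| (FractionalIdeal.mem_inv_iff hI₀).mp hx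
    (algebraMap R K s) ((FractionalIdeal.mem_coeIdeal R⁰).mpr ⟨s, hsI, rfl⟩)
  exact ⟨r, s, hsP, by rw [hr, mul_comm]⟩

theorem map_eq_top_of_mul_inv_eq_one {I : Ideal R}
    (hI : (I : FractionalIdeal R⁰ K) * (I : FractionalIdeal R⁰ K)⁻¹ = 1)
    (hIT : ∀ x ∈ (I : FractionalIdeal R⁰ K)⁻¹, x ∈ T) : I.map (algebraMap R T) = ⊤ := by
  let IT : Submodule R K := ((I.map (algebraMap R T)).restrictScalars R).map T.val.toLinearMap
  have hle : ((I : FractionalIdeal R⁰ K) : Submodule R K) *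
      ((I : FractionalIdeal R⁰ K)⁻¹ : FractionalIdeal R⁰ K) ≤ IT := by
    refine Submodule.mul_le.mpr fun a ha b hb => ?_
    obtain ⟨i, hi, rfl⟩ := (FractionalIdeal.mem_coeIdeal R⁰).mp ha
    exact ⟨algebraMap R T i * ⟨b, hIT b hb⟩,
      Ideal.mul_mem_right _ _ (Ideal.mem_map_of_mem _ hi), rfl⟩
  have h1 : (1 : K) ∈ IT := by
    refine hle ?_
    rw [← FractionalIdeal.coe_mul, hI]
    exact (FractionalIdeal.mem_one_iff R⁰).mpr ⟨1, map_one _⟩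
  obtain ⟨t, ht, ht1⟩ := h1
  rw [show t = 1 from Subtype.ext ht1] at ht
  exact (Ideal.eq_top_iff_one _).mpr ht

theorem mem_of_map_ne_top
    (hpruefer : ∀ I : Ideal R, I.FG → I ≠ ⊥ →
      (I : FractionalIdeal R⁰ K) * (I : FractionalIdeal R⁰ K)⁻¹ = 1)
    (hXne : X.Nonempty) (hX : @IsClosed _ (invTop R) X)
    (hT : ∀ x : K, (∀ P ∈ X, ∃ r s : R, s ∉ P.asIdeal ∧
      algebraMap R K s * x = algebraMap R K r) → x ∈ T)
    {M : MaximalSpectrum R} (hM : M.asIdeal.map (algebraMap R T) ≠ ⊤) : M ∈ X := by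
  by_contra hMX
  obtain ⟨I, hfg, hIM, hIX⟩ := exists_fg_le_subset_of_isOpen_invTop hX.isOpen_compl hMX
  replace hIX : ∀ P ∈ X, ¬ I ≤ P.asIdeal := fun P hP hIP => hIX hIP hP
  have hI : I ≠ ⊥ := fun hI => hIX _ hXne.some_mem (hI ▸ bot_le)
  have hIT : I.map (algebraMap R T) = ⊤ := map_eq_top_of_mul_inv_eq_one (hpruefer I hfg hI)
    fun _ hx => mem_of_mem_inv_of_forall_not_le hT hI hIX hx
  exact hM (eq_top_mono (Ideal.map_mono hIM) hIT)

end Overring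

/-- Let `R` be a one-dimensional Prüfer domain (every nonzero prime is maximal and
every nonzero finitely generated ideal is invertible), `X` a nonempty closed subset
of `Max(R)` in the inverse topology, and `T = ⋂_{P ∈ X} R_P`, realized as the
subalgebra of the fraction field `K` whose elements are those `x ∈ K` that lie in
`R_P` for every `P ∈ X`.  Then the maximal ideals of `T` are exactly the extensions
`P T` for `P ∈ X`. -/
theorem stmt11 {R : Type*} [CommRing R] [IsDomain R]
    (K : Type*) [Field K] [Algebra R K] [IsFractionRing R K]
    (hdim : ∀ P : Ideal R, P.IsPrime → P ≠ ⊥ → P.IsMaximal)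
    (hpruefer : ∀ I : Ideal R, I.FG → I ≠ ⊥ →
      (I : FractionalIdeal R⁰ K) * (I : FractionalIdeal R⁰ K)⁻¹ = 1)
    (X : Set (MaximalSpectrum R)) (hXne : X.Nonempty) (hX : @IsClosed _ (invTop R) X)
    (T : Subalgebra R K)
    (hT : ∀ x : K, x ∈ T ↔ ∀ P ∈ X, ∃ r s : R, s ∉ P.asIdeal ∧
      algebraMap R K s * x = algebraMap R K r) :
    ∀ Q : Ideal T, Q.IsMaximal ↔ ∃ P ∈ X, Q = Ideal.map (algebraMap R T) P.asIdeal := by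
  have hinj : Function.Injective (algebraMap R T) :=
    fun _ _ h => IsFractionRing.injective R K (congrArg Subtype.val h)
  have hmax : ∀ P ∈ X, (P.asIdeal.map (algebraMap R T)).IsMaximal := fun P hP =>
    Ideal.isMaximal_map_of_forall_exists_mul_eq (fun t => by
      obtain ⟨r, s, hs, h⟩ := (hT t).mp t.2 P hP
      exact ⟨r, s, hs, Subtype.ext h⟩) hinj
  intro Q
  refine ⟨fun hQ => ?_, fun ⟨P, hP, hQ⟩ => hQ ▸ hmax P hP⟩
  by_cases hQ₀ : Q = ⊥
  · obtain ⟨P, hP⟩ := hXne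
    exact ⟨P, hP, hQ.eq_of_le (hmax P hP).ne_top (hQ₀ ▸ bot_le)⟩
  have hQR : Q.comap (algebraMap R T) ≠ ⊥ := by
    obtain ⟨t, htQ, ht⟩ := Submodule.exists_mem_ne_zero_of_ne_bot hQ₀
    have : Algebra.IsAlgebraic R K := IsLocalization.isAlgebraic K R⁰
    exact Ideal.comap_ne_bot_of_algebraic_mem ht htQ
      (Subalgebra.isAlgebraic_iff_isAlgebraic_val.mpr (Algebra.IsAlgebraic.isAlgebraic _))
  have := hQ.isPrime
  let M : MaximalSpectrum R := ⟨_, hdim _ (Ideal.IsPrime.comap _) hQR⟩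
  have hMX : M ∈ X := mem_of_map_ne_top hpruefer hXne hX (fun x hx => (hT x).mpr hx)
    (ne_top_of_le_ne_top hQ.ne_top Ideal.map_comap_le)
  exact ⟨M, hMX, ((hmax M hMX).eq_of_le hQ.ne_top Ideal.map_comap_le).symm⟩
end

section
/- Let R be an almost Dedekind domain and I ⊆ J radical ideals. If I is invertible and D(J) is quasi-compact in the Zariski topology of Spec(R), then J is invertible. -/
/-!
Since `D(J)` is quasi-compact, `J = √I₀` for a finitely generated ideal `I₀`. At a maximal ideal
`P ⊇ J`, the nonzero radical ideal `I` localizes to a nonzero radical ideal of the DVR `R_P`, i.e.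
to its maximal ideal, which contains `J_P`; at a maximal ideal `P ⊉ J` also `I₀ ⊄ P`. Hence
`J = I + I₀` is finitely generated. A nonzero finitely generated ideal of an almost Dedekind domain
is locally principal, with local generators taken in the ideal itself, and is therefore invertible.
-/

open nonZeroDivisors

theorem IsDiscreteValuationRing.eq_maximalIdeal_of_isRadical {A : Type*} [CommRing A]
    [IsDomain A] [IsDiscreteValuationRing A] {I : Ideal A} (hI : I.IsRadical) (hI0 : I ≠ ⊥)
    (hI1 : I ≠ ⊤) :
    I = IsLocalRing.maximalIdeal A := by
  obtain ⟨ϖ, hϖ⟩ := exists_irreducible A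
  obtain ⟨n, hn⟩ := ideal_eq_span_pow_irreducible hI0 hϖ
  have hmax : IsLocalRing.maximalIdeal A = Ideal.span {ϖ} :=
    (irreducible_iff_uniformizer ϖ).mp hϖ
  have hn0 : n ≠ 0 := by
    rintro rfl
    exact hI1 (by simpa using hn)
  rw [← hI.radical, hn, ← Ideal.span_singleton_pow, ← hmax, Ideal.radical_pow _ hn0,
    (IsLocalRing.maximalIdeal.isMaximal A).isPrime.radical]

theorem Ideal.map_eq_maximalIdeal_of_isRadical {R : Type*} [CommRing R] [IsDomain R]
    {P : Ideal R} [P.IsPrime] [IsDiscreteValuationRing (Localization.AtPrime P)]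
    {I : Ideal R} (hI : I.IsRadical) (hI0 : I ≠ ⊥) (hIP : I ≤ P) :
    I.map (algebraMap R (Localization.AtPrime P)) = IsLocalRing.maximalIdeal _ := by
  refine IsDiscreteValuationRing.eq_maximalIdeal_of_isRadical ?_ ?_ ?_
  · rw [Ideal.IsRadical, ← IsLocalization.map_radical P.primeCompl, hI.radical]
  · rwa [Ne, Ideal.map_eq_bot_iff_of_injective
      (IsLocalization.injective _ P.primeCompl_le_nonZeroDivisors)]
  · refine ne_top_of_le_ne_top (IsLocalRing.maximalIdeal.isMaximal _).ne_top ?_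
    rw [← Localization.AtPrime.map_eq_maximalIdeal]
    exact Ideal.map_mono hIP

theorem AlmostDedekind.sup_eq_of_radical_eq {R : Type*} [CommRing R] [IsDomain R]
    (hR : AlmostDedekind R) {I I₀ J : Ideal R} (hI : I.IsRadical) (hI0 : I ≠ ⊥) (hIJ : I ≤ J)
    (hI₀J : I₀.radical = J) : I ⊔ I₀ = J := by
  have hI₀J' : I₀ ≤ J := hI₀J ▸ Ideal.le_radical
  refine Ideal.eq_of_localization_maximal fun P hP ↦
    le_antisymm (Ideal.map_mono (sup_le hIJ hI₀J')) ?_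
  have := hR ⟨P, hP⟩
  by_cases hJP : J ≤ P
  · calc J.map (algebraMap R _) ≤ P.map (algebraMap R _) := Ideal.map_mono hJP
      _ = I.map (algebraMap R _) := by
        rw [Localization.AtPrime.map_eq_maximalIdeal,
          Ideal.map_eq_maximalIdeal_of_isRadical hI hI0 (hIJ.trans hJP)]
      _ ≤ (I ⊔ I₀).map (algebraMap R _) := Ideal.map_mono le_sup_left
  · have hI₀P : ¬ I₀ ≤ P := by
      rwa [← hP.isPrime.radical_le_iff, hI₀J]
    rw [IsLocalization.AtPrime.map_eq_top_of_not_le _ fun h ↦ hI₀P (le_sup_right.trans h)]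
    exact le_top

theorem Ideal.exists_fg_radical_eq_of_isCompact {R : Type*} [CommRing R] {J : Ideal R}
    (hJ : IsCompact {P : PrimeSpectrum R | ¬ J ≤ P.asIdeal}) :
    ∃ I₀ : Ideal R, I₀.FG ∧ I₀.radical = J.radical := by
  have hopen : {P : PrimeSpectrum R | ¬ J ≤ P.asIdeal} = (PrimeSpectrum.zeroLocus J)ᶜ := rfl
  obtain ⟨I₀, hfg, hI₀⟩ := PrimeSpectrum.isCompact_isOpen_iff_ideal.mp
    ⟨hJ, hopen ▸ (PrimeSpectrum.isClosed_zeroLocus _).isOpen_compl⟩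
  exact ⟨I₀, hfg, PrimeSpectrum.zeroLocus_eq_iff.mp (compl_injective (hI₀.trans hopen))⟩

theorem IsLocalization.exists_span_singleton_mul_le_of_isPrincipal_map {R S : Type*}
    [CommRing R] [CommRing S] [Algebra R S] (M : Submonoid R) [IsLocalization M S]
    (hM : M ≤ R⁰) {J : Ideal R} (hJ : J.FG) (hJS : (J.map (algebraMap R S)).IsPrincipal) :
    ∃ s ∈ M, ∃ b ∈ J, Ideal.span {s} * J ≤ Ideal.span {b} := by
  classical
  set f := algebraMap R S
  obtain ⟨x, hx⟩ := hJS.principal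
  have hxJ : x ∈ J.map f := hx ▸ Ideal.mem_span_singleton_self x
  obtain ⟨⟨⟨b, hbJ⟩, t⟩, hbt⟩ := (mem_map_algebraMap_iff M S).mp hxJ
  have hspan : J.map f = Ideal.span {f b} := by
    rw [hx, ← hbt, Ideal.span_singleton_mul_right_unit (map_units S t)]
  obtain ⟨T, rfl⟩ := hJ
  have hquot : ∀ g ∈ T, ∃ e : S, e * f b = f g := fun g hg ↦
    Ideal.mem_span_singleton'.mp (hspan ▸ Ideal.mem_map_of_mem f (Ideal.subset_span hg))
  choose! e he using hquot
  obtain ⟨⟨s, hs⟩, hse⟩ := exist_integer_multiples M T e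
  refine ⟨s, hs, b, hbJ, ?_⟩
  rw [Ideal.span_mul_span', Ideal.span_le, Set.singleton_mul]
  rintro _ ⟨g, hg, rfl⟩
  obtain ⟨r, hr⟩ := hse g hg
  refine Ideal.mem_span_singleton'.mpr ⟨r, IsLocalization.injective S hM ?_⟩
  rw [map_mul, map_mul, hr, ← he g hg, Algebra.smul_def, mul_assoc]

theorem FractionalIdeal.algebraMap_mem_coeIdeal_mul_inv {R : Type*} (K : Type*) [CommRing R]
    [IsDomain R] [Field K] [Algebra R K] [IsFractionRing R K] {J : Ideal R} (hJ : J ≠ ⊥)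
    {s b : R} (hs : s ≠ 0) (hb : b ∈ J) (hsJ : Ideal.span {s} * J ≤ Ideal.span {b}) :
    algebraMap R K s ∈ (J : FractionalIdeal R⁰ K) * (J : FractionalIdeal R⁰ K)⁻¹ := by
  have hb0 : algebraMap R K b ≠ 0 := by
    refine (map_ne_zero_iff _ (IsFractionRing.injective R K)).mpr ?_
    rintro rfl
    rw [Ideal.span_singleton_eq_bot.mpr rfl, le_bot_iff, Ideal.mul_eq_bot,
      Ideal.span_singleton_eq_bot] at hsJ
    exact hsJ.elim hs hJ
  have hquot : algebraMap R K s / algebraMap R K b ∈ (J : FractionalIdeal R⁰ K)⁻¹ := by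
    rw [mem_inv_iff (coeIdeal_ne_zero.mpr hJ)]
    intro y hy
    obtain ⟨a, ha, rfl⟩ := (mem_coeIdeal _).mp hy
    obtain ⟨c, hc⟩ := Ideal.mem_span_singleton'.mp
      (hsJ (Ideal.mul_mem_mul (Ideal.mem_span_singleton_self s) ha))
    refine (mem_one_iff _).mpr ⟨c, ?_⟩
    rw [div_mul_eq_mul_div, eq_div_iff hb0, ← map_mul, ← map_mul, hc]
  have := mul_mem_mul ((mem_coeIdeal _).mpr ⟨b, hb, rfl⟩) hquot
  rwa [mul_div_cancel₀ _ hb0] at this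

theorem FractionalIdeal.coeIdeal_mul_inv_eq_one_of_forall_isMaximal {R : Type*} (K : Type*)
    [CommRing R] [IsDomain R] [Field K] [Algebra R K] [IsFractionRing R K] {J : Ideal R}
    (hJ : J ≠ ⊥)
    (h : ∀ P : Ideal R, P.IsMaximal → ∃ s ∉ P, ∃ b ∈ J, Ideal.span {s} * J ≤ Ideal.span {b}) :
    (J : FractionalIdeal R⁰ K) * (J : FractionalIdeal R⁰ K)⁻¹ = 1 := by
  obtain ⟨A, hA⟩ : ∃ A : Ideal R, (A : FractionalIdeal R⁰ K) = J * (J : FractionalIdeal R⁰ K)⁻¹ :=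
    le_one_iff_exists_coeIdeal.mp (by rw [inv_eq]; exact mul_one_div_le_one)
  suffices hA1 : A = ⊤ by rw [← hA, hA1, coeIdeal_top]
  by_contra hA1
  obtain ⟨P, hP, hAP⟩ := A.exists_le_maximal hA1
  obtain ⟨s, hsP, b, hb, hsJ⟩ := h P hP
  have hs0 : s ≠ 0 := by rintro rfl; exact hsP P.zero_mem
  obtain ⟨s', hs'A, hs's⟩ := (mem_coeIdeal _).mp
    (hA ▸ algebraMap_mem_coeIdeal_mul_inv K hJ hs0 hb hsJ)
  exact hsP (hAP (IsFractionRing.injective R K hs's ▸ hs'A))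

theorem AlmostDedekind.coeIdeal_mul_inv_eq_one_of_fg {R : Type*} [CommRing R] [IsDomain R]
    (hR : AlmostDedekind R) (K : Type*) [Field K] [Algebra R K] [IsFractionRing R K]
    {J : Ideal R} (hJ : J.FG) (hJ0 : J ≠ ⊥) :
    (J : FractionalIdeal R⁰ K) * (J : FractionalIdeal R⁰ K)⁻¹ = 1 := by
  refine FractionalIdeal.coeIdeal_mul_inv_eq_one_of_forall_isMaximal K hJ0 fun P hP ↦ ?_
  have := hR ⟨P, hP⟩
  exact IsLocalization.exists_span_singleton_mul_le_of_isPrincipal_map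
    (S := Localization.AtPrime P) P.primeCompl P.primeCompl_le_nonZeroDivisors hJ
    (IsPrincipalIdealRing.principal _)

/-- Let `R` be an almost Dedekind domain with fraction field `K`, and let `I ⊆ J` be
radical ideals.  If `I` is invertible (as a fractional ideal) and
`D(J) = {P ∈ Spec(R) | J ⊄ P}` is quasi-compact in the Zariski topology, then `J`
is invertible. -/
theorem stmt15 {R : Type*} [CommRing R] [IsDomain R] (hR : AlmostDedekind R)
    (K : Type*) [Field K] [Algebra R K] [IsFractionRing R K]
    (I J : Ideal R) (hIrad : I.IsRadical) (hJrad : J.IsRadical) (hIJ : I ≤ J)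
    (hIinv : (I : FractionalIdeal R⁰ K) * (I : FractionalIdeal R⁰ K)⁻¹ = 1)
    (hDJ : IsCompact {P : PrimeSpectrum R | ¬ J ≤ P.asIdeal}) :
    (J : FractionalIdeal R⁰ K) * (J : FractionalIdeal R⁰ K)⁻¹ = 1 := by
  have hI0 : I ≠ ⊥ := by
    rintro rfl
    simp at hIinv
  have hIfg : I.FG :=
    Ideal.fg_of_isUnit (IsFractionRing.injective R K) I (IsUnit.of_mul_eq_one _ hIinv)
  obtain ⟨I₀, hI₀fg, hI₀J⟩ := Ideal.exists_fg_radical_eq_of_isCompact hDJ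
  have hJ : I ⊔ I₀ = J := hR.sup_eq_of_radical_eq hIrad hI0 hIJ (hI₀J.trans hJrad.radical)
  exact hR.coeIdeal_mul_inv_eq_one_of_fg K (hJ ▸ Submodule.FG.sup hIfg hI₀fg)
    (ne_bot_of_le_ne_bot hI0 hIJ)
end

section
/- Let R be an almost Dedekind domain, ℓ a singular length function on R with associated ideal colength τ (τ(I) := ℓ(R/I) ∈ {0, ∞}). Then for all ideals I, J of R: τ(IJ) = τ(I) + τ(J); and if Iⁿ ⊆ J ⊆ I for some n ≥ 1, then τ(I) = τ(J). -/
open scoped ENNReal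

universe u

/-! Since `τ` only takes the values `0` and `∞`, the product formula reduces to showing
`τ(IJ) = 0` when `τ(I) = τ(J) = 0`. The module `I/IJ` is killed by `J`, so each cyclic
submodule of it is a quotient of `R/J` and has length `0`; by additivity so has every finitely
generated submodule, hence by continuity `I/IJ` itself, and `τ(IJ) = τ(I) + ℓ(I/IJ) = 0`.
Iterating gives `τ(Iⁿ) = τ(I)`, and the second claim follows as `τ` is antitone. -/

lemma Submodule.le_annihilator_map_mkQ_smul {R M : Type*} [CommRing R] [AddCommGroup M]
    [Module R M] (J : Ideal R) (N : Submodule R M) :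
    J ≤ Module.annihilator R ↥(N.map (J • N).mkQ) := by
  rintro j hj
  rw [Module.mem_annihilator]
  rintro ⟨_, x, hx, rfl⟩
  ext
  change (J • N).mkQ (j • x) = 0
  exact (Submodule.Quotient.mk_eq_zero _).2 (Submodule.smul_mem_smul hj hx)

namespace SingularLength

variable {R : Type u} [CommRing R]
  (ℓ : ∀ (M : Type u) [AddCommGroup M] [Module R M], ℝ≥0∞)
  (hsing : ∀ (M : Type u) [AddCommGroup M] [Module R M], ℓ M = 0 ∨ ℓ M = ∞)
  (hzero : ∀ (M : Type u) [AddCommGroup M] [Module R M], Subsingleton M → ℓ M = 0)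
  (hadd : ∀ (A B C : Type u) [AddCommGroup A] [Module R A] [AddCommGroup B]
      [Module R B] [AddCommGroup C] [Module R C] (f : A →ₗ[R] B) (g : B →ₗ[R] C),
      Function.Injective f → Function.Surjective g →
      LinearMap.range f = LinearMap.ker g → ℓ B = ℓ A + ℓ C)
  (hsup : ∀ (M : Type u) [AddCommGroup M] [Module R M],
      ℓ M = ⨆ N : {N : Submodule R M // N.FG}, ℓ N.1)

include hadd in
lemma length_eq_add_length_quotient {M : Type u} [AddCommGroup M] [Module R M]
    (N : Submodule R M) : ℓ M = ℓ N + ℓ (M ⧸ N) :=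
  hadd N M (M ⧸ N) N.subtype N.mkQ N.injective_subtype N.mkQ_surjective
    (by rw [Submodule.range_subtype, Submodule.ker_mkQ])

include hzero hadd in
lemma length_congr {M N : Type u} [AddCommGroup M] [Module R M] [AddCommGroup N]
    [Module R N] (e : M ≃ₗ[R] N) : ℓ M = ℓ N := by
  rw [hadd M N (N ⧸ (⊤ : Submodule R N)) e.toLinearMap (⊤ : Submodule R N).mkQ
      e.injective (Submodule.mkQ_surjective _) (by rw [LinearEquiv.range, Submodule.ker_mkQ]),
    hzero _ (Submodule.Quotient.subsingleton_iff.2 rfl), add_zero]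

include hzero hadd in
lemma length_le_of_surjective {M N : Type u} [AddCommGroup M] [Module R M] [AddCommGroup N]
    [Module R N] {g : M →ₗ[R] N} (hg : Function.Surjective g) : ℓ N ≤ ℓ M := by
  rw [length_eq_add_length_quotient ℓ hadd (LinearMap.ker g),
    length_congr ℓ hzero hadd (g.quotKerEquivOfSurjective hg)]
  exact le_add_self

include hzero hadd in
lemma length_quotient_eq_add {M : Type u} [AddCommGroup M] [Module R M]
    {S T : Submodule R M} (h : S ≤ T) : ℓ (M ⧸ S) = ℓ (T.map S.mkQ) + ℓ (M ⧸ T) := by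
  rw [length_eq_add_length_quotient ℓ hadd (T.map S.mkQ),
    length_congr ℓ hzero hadd (Submodule.quotientQuotientEquivQuotient S T h)]

include hzero hadd in
lemma length_quotient_le_of_le {M : Type u} [AddCommGroup M] [Module R M]
    {S T : Submodule R M} (h : S ≤ T) : ℓ (M ⧸ T) ≤ ℓ (M ⧸ S) := by
  rw [length_quotient_eq_add ℓ hzero hadd h]
  exact le_add_self

include hzero hadd in
lemma length_sup_le {M : Type u} [AddCommGroup M] [Module R M] (N₁ N₂ : Submodule R M) :
    ℓ ↥(N₁ ⊔ N₂) ≤ ℓ N₁ + ℓ N₂ := by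
  rw [length_eq_add_length_quotient ℓ hadd (N₂.comap (N₁ ⊔ N₂).subtype),
    length_congr ℓ hzero hadd (Submodule.comapSubtypeEquivOfLe le_sup_right),
    ← length_congr ℓ hzero hadd (LinearMap.quotientInfEquivSupQuotient N₁ N₂), add_comm]
  gcongr
  exact length_le_of_surjective ℓ hzero hadd (Submodule.mkQ_surjective _)

include hzero hadd in
lemma length_span_singleton_le {M : Type u} [AddCommGroup M] [Module R M] {J : Ideal R} {x : M}
    (hJ : J ≤ Ideal.torsionOf R M x) : ℓ ↥(R ∙ x) ≤ ℓ (R ⧸ J) := by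
  rw [← length_congr ℓ hzero hadd (Ideal.quotTorsionOfEquivSpanSingleton R M x)]
  exact length_quotient_le_of_le ℓ hzero hadd hJ

include hzero hadd hsup in
lemma length_eq_zero_of_le_annihilator {M : Type u} [AddCommGroup M] [Module R M] {J : Ideal R}
    (hJ : ℓ (R ⧸ J) = 0) (hJM : J ≤ Module.annihilator R M) : ℓ M = 0 := by
  rw [hsup M, ENNReal.iSup_eq_zero]
  rintro ⟨N, hN⟩
  induction N, hN using Submodule.fg_induction with
  | singleton x =>
    refine le_antisymm (hJ ▸ length_span_singleton_le ℓ hzero hadd fun r hr ↦ ?_) zero_le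
    exact (Ideal.mem_torsionOf_iff x r).2 (Module.mem_annihilator.1 (hJM hr) x)
  | sup N₁ N₂ _ _ h₁ h₂ =>
    exact le_antisymm ((length_sup_le ℓ hzero hadd N₁ N₂).trans_eq (by rw [h₁, h₂, add_zero]))
      zero_le

include hsing hzero hadd hsup in
lemma length_quotient_mul (I J : Ideal R) : ℓ (R ⧸ I * J) = ℓ (R ⧸ I) + ℓ (R ⧸ J) := by
  rcases hsing (R ⧸ I) with hI | hI
  · rcases hsing (R ⧸ J) with hJ | hJ
    · have hIJ : ℓ ↥(Submodule.map (I * J).mkQ I) = 0 := by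
        refine length_eq_zero_of_le_annihilator ℓ hzero hadd hsup hJ ?_
        rw [mul_comm, ← Ideal.smul_eq_mul]
        exact J.le_annihilator_map_mkQ_smul I
      rw [length_quotient_eq_add ℓ hzero hadd Ideal.mul_le_left, hIJ, hI, hJ]
    · rw [hJ, add_top]
      exact top_unique (hJ ▸ length_quotient_le_of_le ℓ hzero hadd Ideal.mul_le_right)
  · rw [hI, top_add]
    exact top_unique (hI ▸ length_quotient_le_of_le ℓ hzero hadd Ideal.mul_le_left)

include hsing hzero hadd hsup in
lemma length_quotient_pow (I : Ideal R) {n : ℕ} (hn : 1 ≤ n) :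
    ℓ (R ⧸ I ^ n) = ℓ (R ⧸ I) := by
  induction n, hn using Nat.le_induction with
  | base => rw [pow_one]
  | succ n _ ih =>
    rw [pow_succ, length_quotient_mul ℓ hsing hzero hadd hsup, ih]
    rcases hsing (R ⧸ I) with h | h <;> simp [h]

end SingularLength

open SingularLength in
theorem stmt18_general {R : Type u} [CommRing R]
    (ℓ : ∀ (M : Type u) [AddCommGroup M] [Module R M], ℝ≥0∞)
    (hsing : ∀ (M : Type u) [AddCommGroup M] [Module R M], ℓ M = 0 ∨ ℓ M = ∞)
    (hzero : ∀ (M : Type u) [AddCommGroup M] [Module R M], Subsingleton M → ℓ M = 0)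
    (hadd : ∀ (A B C : Type u) [AddCommGroup A] [Module R A] [AddCommGroup B]
      [Module R B] [AddCommGroup C] [Module R C] (f : A →ₗ[R] B) (g : B →ₗ[R] C),
      Function.Injective f → Function.Surjective g →
      LinearMap.range f = LinearMap.ker g → ℓ B = ℓ A + ℓ C)
    (hsup : ∀ (M : Type u) [AddCommGroup M] [Module R M],
      ℓ M = ⨆ N : {N : Submodule R M // N.FG}, ℓ N.1) :
    ∀ I J : Ideal R,
      (ℓ (R ⧸ (I * J)) = ℓ (R ⧸ I) + ℓ (R ⧸ J)) ∧
      (∀ n : ℕ, 1 ≤ n → I ^ n ≤ J → J ≤ I → ℓ (R ⧸ I) = ℓ (R ⧸ J)) := by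
  refine fun I J ↦ ⟨length_quotient_mul ℓ hsing hzero hadd hsup I J, fun n hn hIJ hJI ↦ ?_⟩
  refine le_antisymm (length_quotient_le_of_le ℓ hzero hadd hJI) ?_
  calc ℓ (R ⧸ J) ≤ ℓ (R ⧸ I ^ n) := length_quotient_le_of_le ℓ hzero hadd hIJ
    _ = ℓ (R ⧸ I) := length_quotient_pow ℓ hsing hzero hadd hsup I hn

/-- Let `R` be an almost Dedekind domain and `ℓ` a singular length function on `R`:
`ℓ` takes only the values `0` and `∞`, vanishes on the zero module, is additive on
short exact sequences, and is the supremum of its values on finitely generated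
submodules.  Let `τ(I) := ℓ(R/I)` be the associated ideal colength.  Then
`τ(IJ) = τ(I) + τ(J)` for all ideals `I, J`, and if `Iⁿ ⊆ J ⊆ I` for some `n ≥ 1`
then `τ(I) = τ(J)`. -/
theorem stmt18 {R : Type u} [CommRing R] [IsDomain R] (hR : AlmostDedekind R)
    (ℓ : ∀ (M : Type u) [AddCommGroup M] [Module R M], ℝ≥0∞)
    (hsing : ∀ (M : Type u) [AddCommGroup M] [Module R M], ℓ M = 0 ∨ ℓ M = ∞)
    (hzero : ∀ (M : Type u) [AddCommGroup M] [Module R M], Subsingleton M → ℓ M = 0)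
    (hadd : ∀ (A B C : Type u) [AddCommGroup A] [Module R A] [AddCommGroup B]
      [Module R B] [AddCommGroup C] [Module R C] (f : A →ₗ[R] B) (g : B →ₗ[R] C),
      Function.Injective f → Function.Surjective g →
      LinearMap.range f = LinearMap.ker g → ℓ B = ℓ A + ℓ C)
    (hsup : ∀ (M : Type u) [AddCommGroup M] [Module R M],
      ℓ M = ⨆ N : {N : Submodule R M // N.FG}, ℓ N.1) :
    ∀ I J : Ideal R,
      (ℓ (R ⧸ (I * J)) = ℓ (R ⧸ I) + ℓ (R ⧸ J)) ∧
      (∀ n : ℕ, 1 ≤ n → I ^ n ≤ J → J ≤ I → ℓ (R ⧸ I) = ℓ (R ⧸ J)) :=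
  stmt18_general ℓ hsing hzero hadd hsup
end
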